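/- arXiv:2412.01143 — 3 statements merged into one kernel-verified Lean document; each statement's English description precedes it below -/
import Mathlib

section
/- For every real α ≥ 1 there exists a constant C = C(α), depending only on α, such that for every n ≥ 2 and every undirected graph G = (V, E, w) on n vertices with positive edge weights whose minimum cut value λ = min_{∅⊂S⊂V} w_G(S, V∖S) is strictly positive, the number of unordered cuts {S, V∖S} (with ∅ ⊂ S ⊂ V) satisfying w_G(S, V∖S) ≤ α·λ is at most C·n^⌊2α⌋. -/
/-!
Karger's tree-packing argument. Since every cut weighs at least `λ`, for every cost `c ≥ 0` on
the edges Kruskal's algorithm finds a spanning tree `T` with `c(T) ≤ ∑ₑ cₑ wₑ / λ`: by the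
layer-cake formula it suffices that, for every threshold `t`, fewer edges of `T` cost more than
`t` than there are components of the edges of cost `≤ t`, and the boundaries of those `m`
components carry weight at least `m λ`, all of it on edges of cost `> t`. By the minimax theorem
(a separating hyperplane) there is then a probability distribution on spanning trees under which
every edge `e` lies in the tree with probability at most `wₑ / λ`. An `α`-approximate cut is
therefore crossed by at most `2α` tree edges on average, and by Markov's inequality by at most
`k = ⌊2α⌋` of them with probability at least `(k + 1 - 2α) / (k + 1)`. A spanning tree and the set
of its edges crossing a cut determine the cut, so a fixed tree is crossed at most `k` times by at
most `(k + 1) nᵏ` cuts, and double counting gives at most `(k + 1)² / (k + 1 - 2α) · nᵏ` cuts.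
-/

open Finset Matrix

namespace Setoid

variable {V : Type*}

theorem exists_not_rel_of_ne_top {s : Setoid V} (hs : s ≠ ⊤) :
    ∃ e : V × V, ¬ s e.1 e.2 := by
  by_contra! h
  exact hs (Setoid.ext fun a b => iff_of_true (h (a, b)) trivial)

variable [Finite V] {r s : Setoid V}

theorem card_quotient_le_of_le (h : r ≤ s) : Nat.card (Quotient s) ≤ Nat.card (Quotient r) :=
  Nat.card_le_card_of_surjective _
    (Quotient.map_surjective (fun _ _ hab => h hab) Function.surjective_id)

theorem card_quotient_lt_of_le (h : r ≤ s) {a b : V} (hs : s a b) (hr : ¬ r a b) :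
    Nat.card (Quotient s) < Nat.card (Quotient r) := by
  have hsurj := Quotient.map_surjective (fun _ _ hab => h hab) Function.surjective_id
  refine lt_of_not_ge fun hle => hr (Quotient.exact ?_)
  exact (hsurj.bijective_of_nat_card_le hle).1
    (Quotient.sound hs : (⟦a⟧ : Quotient s) = ⟦b⟧)

end Setoid

section LayerCake

open MeasureTheory Set

theorem integrableOn_Ioi_indicator_Iio (x r : ℝ) :
    IntegrableOn ((Iio x).indicator fun _ => r) (Ioi 0) := by
  rw [IntegrableOn, integrable_indicator_iff measurableSet_Iio, IntegrableOn,
    Measure.restrict_restrict measurableSet_Iio, Iio_inter_Ioi]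
  exact integrableOn_const measure_Ioo_lt_top.ne

variable {ι : Type*} (A : Finset ι) (a c : ι → ℝ)

theorem sum_filter_lt_eq_sum_indicator (t : ℝ) :
    ∑ i ∈ A with t < c i, a i = ∑ i ∈ A, (Iio (c i)).indicator (fun _ => a i) t := by
  simp [Finset.sum_filter, Set.indicator_apply]

theorem integrableOn_sum_filter_lt :
    IntegrableOn (fun t => ∑ i ∈ A with t < c i, a i) (Ioi 0) := by
  simp_rw [sum_filter_lt_eq_sum_indicator]
  exact integrable_finsetSum _ fun i _ => integrableOn_Ioi_indicator_Iio _ _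

theorem integral_sum_filter_lt (hc : ∀ i, 0 ≤ c i) :
    ∫ t in Ioi 0, ∑ i ∈ A with t < c i, a i = ∑ i ∈ A, a i * c i := by
  simp_rw [sum_filter_lt_eq_sum_indicator]
  rw [integral_finsetSum _ fun i _ => integrableOn_Ioi_indicator_Iio _ _]
  refine sum_congr rfl fun i _ => ?_
  rw [integral_indicator measurableSet_Iio, Measure.restrict_restrict measurableSet_Iio,
    Iio_inter_Ioi, setIntegral_const, Real.volume_real_Ioo_of_le (hc i), smul_eq_mul, sub_zero,
    mul_comm]

theorem sum_mul_le_sum_mul_of_sum_filter_lt_le (B : Finset ι) (b : ι → ℝ)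
    (hc : ∀ i, 0 ≤ c i)
    (h : ∀ t > 0, ∑ i ∈ A with t < c i, a i ≤ ∑ i ∈ B with t < c i, b i) :
    ∑ i ∈ A, a i * c i ≤ ∑ i ∈ B, b i * c i := by
  rw [← integral_sum_filter_lt A a c hc, ← integral_sum_filter_lt B b c hc]
  exact setIntegral_mono_on (integrableOn_sum_filter_lt A a c) (integrableOn_sum_filter_lt B b c)
    measurableSet_Ioi h

end LayerCake

theorem Matrix.exists_mem_stdSimplex_vecMul_nonpos {τ ι : Type*} [Fintype τ] [Fintype ι]
    [DecidableEq τ] [DecidableEq ι] (x : Matrix τ ι ℝ)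
    (h : ∀ c : ι → ℝ, 0 ≤ c → ∃ T, (x *ᵥ c) T ≤ 0) :
    ∃ μ ∈ stdSimplex ℝ τ, μ ᵥ* x ≤ 0 := by
  by_contra! hne
  have hdisj : Disjoint (x.vecMulLinear '' stdSimplex ℝ τ) (Set.Iic 0) :=
    Set.disjoint_left.2 fun _ ⟨μ, hμ, hy⟩ hy0 => hne μ hμ (by subst hy; exact hy0)
  obtain ⟨f, u, v, hK, huv, hO⟩ := geometric_hahn_banach_compact_closed
    ((convex_stdSimplex ℝ τ).linear_image _)
    ((isCompact_stdSimplex ℝ τ).image (LinearMap.continuous_of_finiteDimensional _))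
    (convex_Iic 0) isClosed_Iic hdisj
  have hv : v < 0 := by simpa using hO 0 (Set.mem_Iic.2 le_rfl)
  -- The separating functional, read on the unit vectors, is a cost vector that contradicts `h`.
  set c : ι → ℝ := fun i => -f (Pi.single i 1)
  have hc : 0 ≤ c := by
    intro i
    by_contra! hpos
    have hneg : c i < 0 := hpos
    have := hO (((1 - v) / c i) • Pi.single i 1) (Set.mem_Iic.2 (smul_nonpos_of_nonpos_of_nonneg
      (div_nonpos_of_nonneg_of_nonpos (by linarith) hneg.le) (by simp [Pi.single_nonneg])))
    rw [map_smul, smul_eq_mul, show f (Pi.single i 1) = -c i from (neg_neg _).symm,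
      mul_neg, div_mul_cancel₀ _ hneg.ne] at this
    linarith
  obtain ⟨T, hT⟩ := h c hc
  have hfx : f (x T) = -(x *ᵥ c) T := by
    conv_lhs => rw [pi_eq_sum_univ' (x T), map_sum]
    simp [c, mulVec, dotProduct]
  have := hK (x T) ⟨Pi.single T 1, single_mem_stdSimplex ℝ T, by ext; simp⟩
  linarith

section Counting

theorem one_sub_div_le_sum_filter_le {τ : Type*} [Fintype τ] {μ : τ → ℝ}
    (hμ : μ ∈ stdSimplex ℝ τ) (X : τ → ℕ) (k : ℕ) :
    1 - (∑ t, μ t * X t) / (k + 1) ≤ ∑ t with X t ≤ k, μ t := by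
  have htail : (∑ t with ¬ X t ≤ k, μ t) * (k + 1) ≤ ∑ t, μ t * X t := by
    rw [sum_mul]
    refine (sum_le_sum fun t ht => mul_le_mul_of_nonneg_left ?_ (hμ.1 t)).trans
      (sum_le_sum_of_subset_of_nonneg (filter_subset _ _) fun t _ _ =>
        mul_nonneg (hμ.1 t) (Nat.cast_nonneg _))
    exact_mod_cast Nat.lt_of_not_le (mem_filter.1 ht).2
  have hsplit := sum_filter_add_sum_filter_not univ (fun t => X t ≤ k) μ
  rw [hμ.2, ← eq_sub_iff_add_eq'] at hsplit
  rwa [sub_le_comm, ← hsplit, le_div_iff₀ (by positivity)]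

theorem card_le_of_forall_sum_mul_le {σ τ : Type*} [Fintype τ] {μ : τ → ℝ}
    (hμ : μ ∈ stdSimplex ℝ τ) (C : Finset σ) (X : σ → τ → ℕ) {a : ℝ} {k N : ℕ} (ha : a < k + 1)
    (hX : ∀ S ∈ C, ∑ t, μ t * X S t ≤ a) (hN : ∀ t, #{S ∈ C | X S t ≤ k} ≤ N) :
    (#C : ℝ) ≤ (k + 1) / (k + 1 - a) * N := by
  have hpos : 0 < (k + 1 - a) / (k + 1) := div_pos (by linarith) (by positivity)
  have hp : ∀ S ∈ C, (k + 1 - a) / (k + 1) ≤ ∑ t with X S t ≤ k, μ t := fun S hS =>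
    calc (k + 1 - a) / (k + 1) = 1 - a / (k + 1) := by field_simp
      _ ≤ 1 - (∑ t, μ t * X S t) / (k + 1) := by gcongr; exact hX S hS
      _ ≤ _ := one_sub_div_le_sum_filter_le hμ (X S) k
  have hcount : (#C : ℝ) * ((k + 1 - a) / (k + 1)) ≤ N :=
    calc (#C : ℝ) * ((k + 1 - a) / (k + 1)) ≤ ∑ S ∈ C, ∑ t with X S t ≤ k, μ t := by
          rw [← nsmul_eq_mul]; exact card_nsmul_le_sum _ _ _ hp
      _ = ∑ t, ∑ S ∈ C with X S t ≤ k, μ t := by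
          simp only [sum_filter]; exact sum_comm
      _ ≤ ∑ t, μ t * N := sum_le_sum fun t _ => by
          rw [sum_const, nsmul_eq_mul, mul_comm]
          exact mul_le_mul_of_nonneg_left (by exact_mod_cast hN t) (hμ.1 t)
      _ = N := by rw [← sum_mul, hμ.2, one_mul]
  rw [← le_div_iff₀ hpos, div_div_eq_mul_div] at hcount
  exact hcount.trans_eq (by ring)

theorem card_powerset_filter_card_le {α : Type*} (T : Finset α) {N : ℕ} (k : ℕ) (hN : 0 < N)
    (hT : #T ≤ N) : #{F ∈ T.powerset | #F ≤ k} ≤ (k + 1) * N ^ k := by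
  classical
  calc #{F ∈ T.powerset | #F ≤ k} ≤ #((range (k + 1)).biUnion T.powersetCard) :=
        card_le_card fun F hF => by
          rw [mem_filter, mem_powerset] at hF
          exact mem_biUnion.2 ⟨#F, mem_range.2 (Nat.lt_succ_of_le hF.2),
            mem_powersetCard.2 ⟨hF.1, rfl⟩⟩
    _ ≤ ∑ j ∈ range (k + 1), #(T.powersetCard j) := card_biUnion_le
    _ ≤ ∑ _j ∈ range (k + 1), N ^ k := sum_le_sum fun j hj => by
        rw [card_powersetCard]
        exact (Nat.choose_le_pow _ _).trans ((Nat.pow_le_pow_left hT j).trans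
          (Nat.pow_le_pow_right hN (Nat.le_of_lt_succ (mem_range.1 hj))))
    _ = (k + 1) * N ^ k := by rw [sum_const, card_range, smul_eq_mul]

end Counting

section Components

variable {V : Type*}

def edgeSetoid (F : Finset (V × V)) : Setoid V :=
  Relation.EqvGen.setoid fun u v => (u, v) ∈ F

noncomputable def numComponents (F : Finset (V × V)) : ℕ :=
  Nat.card (Quotient (edgeSetoid F))

theorem edgeSetoid_rel_of_mem {F : Finset (V × V)} {e : V × V} (he : e ∈ F) :
    edgeSetoid F e.1 e.2 :=
  Relation.EqvGen.rel _ _ he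

theorem edgeSetoid_le_iff {F : Finset (V × V)} {s : Setoid V} :
    edgeSetoid F ≤ s ↔ ∀ e ∈ F, s e.1 e.2 :=
  ⟨fun h _ he => h (edgeSetoid_rel_of_mem he),
    fun h => Setoid.eqvGen_le fun u v huv => h (u, v) huv⟩

theorem edgeSetoid_mono {F F' : Finset (V × V)} (h : F ⊆ F') : edgeSetoid F ≤ edgeSetoid F' :=
  edgeSetoid_le_iff.2 fun _ he => edgeSetoid_rel_of_mem (h he)

theorem edgeSetoid_empty : edgeSetoid (∅ : Finset (V × V)) = ⊥ :=
  le_bot_iff.1 (edgeSetoid_le_iff.2 fun _ he => absurd he (notMem_empty _))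

theorem numComponents_empty : numComponents (∅ : Finset (V × V)) = Nat.card V := by
  rw [numComponents, edgeSetoid_empty]
  exact Nat.card_congr Setoid.quotientBotEquiv

theorem numComponents_anti [Finite V] {F F' : Finset (V × V)} (h : F ⊆ F') :
    numComponents F' ≤ numComponents F :=
  Setoid.card_quotient_le_of_le (edgeSetoid_mono h)

theorem numComponents_le_one_iff [Finite V] {F : Finset (V × V)} :
    numComponents F ≤ 1 ↔ edgeSetoid F = ⊤ := by
  rw [numComponents, Finite.card_le_one_iff_subsingleton, Quotient.subsingleton_iff]

theorem one_le_numComponents [Finite V] [Nonempty V] (F : Finset (V × V)) :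
    1 ≤ numComponents F :=
  have : Nonempty (Quotient (edgeSetoid F)) := ⟨⟦Classical.arbitrary V⟧⟩
  Nat.card_pos

variable [DecidableEq V]

theorem edgeSetoid_union_of_forall_rel {F X : Finset (V × V)}
    (h : ∀ e ∈ X, edgeSetoid F e.1 e.2) : edgeSetoid (F ∪ X) = edgeSetoid F := by
  refine le_antisymm (edgeSetoid_le_iff.2 fun e he => ?_) (edgeSetoid_mono subset_union_left)
  rcases mem_union.1 he with he | he
  exacts [edgeSetoid_rel_of_mem he, h e he]

theorem numComponents_insert_lt [Finite V] {F : Finset (V × V)} {e : V × V}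
    (he : ¬ edgeSetoid F e.1 e.2) : numComponents (insert e F) < numComponents F :=
  Setoid.card_quotient_lt_of_le (edgeSetoid_mono (subset_insert e F))
    (edgeSetoid_rel_of_mem (mem_insert_self e F)) he

end Components

section Kruskal

variable {V : Type*} [Fintype V]

open scoped Classical in
noncomputable def spanningTrees (V : Type*) [Fintype V] : Finset (Finset (V × V)) :=
  {T | edgeSetoid T = ⊤ ∧ #T < Fintype.card V}

theorem mem_spanningTrees {T : Finset (V × V)} :
    T ∈ spanningTrees V ↔ edgeSetoid T = ⊤ ∧ #T < Fintype.card V := by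
  simp [spanningTrees]

variable [DecidableEq V] [Nonempty V]

/-- Kruskal's algorithm started from `F`: keep adding a cheapest edge between two components. -/
theorem exists_kruskal_extension (c : V × V → ℝ) (F : Finset (V × V)) :
    ∃ T, F ⊆ T ∧ edgeSetoid T = ⊤ ∧ #T + 1 ≤ #F + numComponents F ∧
      ∀ t, #{e ∈ T \ F | t < c e} + 1 ≤
        numComponents (F ∪ ({e | c e ≤ t} : Finset _)) := by
  classical
  by_cases hF : edgeSetoid F = ⊤
  · refine ⟨F, subset_rfl, hF, by simp [one_le_numComponents], fun t => ?_⟩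
    simpa using one_le_numComponents _
  obtain ⟨e₀, he₀, hmin⟩ := exists_min_image {e | ¬ edgeSetoid F e.1 e.2} c
    (let ⟨e, he⟩ := Setoid.exists_not_rel_of_ne_top hF; ⟨e, by simpa using he⟩)
  rw [mem_filter] at he₀
  have he₀F : e₀ ∉ F := fun h => he₀.2 (edgeSetoid_rel_of_mem h)
  have hlt := numComponents_insert_lt he₀.2
  obtain ⟨T, hFT, hT, hcard, hlayer⟩ := exists_kruskal_extension c (insert e₀ F)
  refine ⟨T, (subset_insert _ _).trans hFT, hT, ?_, fun t => ?_⟩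
  · rw [card_insert_of_notMem he₀F] at hcard
    omega
  have hIH := hlayer t
  by_cases ht : c e₀ ≤ t
  · have hG : insert e₀ F ∪ ({e | c e ≤ t} : Finset _) =
        F ∪ ({e | c e ≤ t} : Finset _) := by
      rw [insert_union, insert_eq_of_mem (mem_union_right _ (by simpa using ht))]
    have hsub : {e ∈ T \ F | t < c e} ⊆ {e ∈ T \ insert e₀ F | t < c e} := by
      intro e
      simp only [mem_filter, mem_sdiff, mem_insert]
      rintro ⟨⟨heT, heF⟩, hte⟩
      exact ⟨⟨heT, fun h => h.elim (fun h => by subst h; linarith) heF⟩, hte⟩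
    rw [hG] at hIH
    exact (Nat.add_le_add_right (card_le_card hsub) 1).trans hIH
  · -- `e₀` is a cheapest crossing edge, so the edges of cost `≤ t` lie inside components of `F`.
    have hGF : edgeSetoid (F ∪ ({e | c e ≤ t} : Finset _)) = edgeSetoid F := by
      refine edgeSetoid_union_of_forall_rel fun e he => ?_
      by_contra hcross
      have := hmin e (by simpa using hcross)
      simp only [mem_filter, mem_univ, true_and] at he
      linarith
    have hsub : {e ∈ T \ F | t < c e} ⊆ insert e₀ {e ∈ T \ insert e₀ F | t < c e} := by
      intro e
      simp only [mem_filter, mem_sdiff, mem_insert]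
      tauto
    have hmono := numComponents_anti (subset_union_left (s₂ := ({e | c e ≤ t} : Finset _))
      (s₁ := insert e₀ F))
    rw [numComponents, hGF, ← numComponents]
    have := (card_le_card hsub).trans (card_insert_le _ _)
    omega
termination_by numComponents F

end Kruskal

section Cuts

variable {V : Type*} [Fintype V] [DecidableEq V] (w : V → V → ℝ)

def cutWeight (S : Finset V) : ℝ :=
  ∑ u ∈ S, ∑ v ∈ Sᶜ, w u v

/-- Ordered pairs stand for undirected edges, so the boundary contains both orientations of
every crossing edge. -/
def edgeBoundary (S : Finset V) : Finset (V × V) :=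
  S ×ˢ Sᶜ ∪ Sᶜ ×ˢ S

theorem mem_edgeBoundary {S : Finset V} {e : V × V} :
    e ∈ edgeBoundary S ↔ (e.1 ∈ S ↔ e.2 ∉ S) := by
  simp only [edgeBoundary, mem_union, mem_product, mem_compl]
  tauto

theorem sum_edgeBoundary (hsymm : ∀ u v, w u v = w v u) (S : Finset V) :
    ∑ e ∈ edgeBoundary S, w e.1 e.2 = 2 * cutWeight w S := by
  rw [edgeBoundary, sum_union (disjoint_left.2 fun e he he' => by
    simp only [mem_product, mem_compl] at he he'; tauto), sum_product, sum_product, two_mul,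
    cutWeight]
  congr 1
  rw [sum_comm]
  simp only [hsymm _]

variable {w} {lam : ℝ}

theorem card_quotient_mul_le_sum_not_rel
    (hlb : ∀ S : Finset V, S.Nonempty → S ≠ univ → lam ≤ cutWeight w S)
    {s : Setoid V} [DecidableRel s] (hs : s ≠ ⊤) :
    Nat.card (Quotient s) * lam ≤ ∑ e : V × V with ¬ s e.1 e.2, w e.1 e.2 := by
  let cls : Quotient s → Finset V := fun q => {v | ⟦v⟧ = q}
  obtain ⟨e, he⟩ := Setoid.exists_not_rel_of_ne_top hs
  have hcut (q : Quotient s) : lam ≤ cutWeight w (cls q) := by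
    refine hlb _ ⟨q.out, by simp [cls]⟩ fun huniv => he (Quotient.exact ?_)
    have h1 : e.1 ∈ cls q := huniv ▸ mem_univ _
    have h2 : e.2 ∈ cls q := huniv ▸ mem_univ _
    simp only [cls, mem_filter, mem_univ, true_and] at h1 h2
    rw [h1, h2]
  calc (Nat.card (Quotient s) : ℝ) * lam = ∑ q : Quotient s, lam := by
        simp [Nat.card_eq_fintype_card]
    _ ≤ ∑ q, cutWeight w (cls q) := sum_le_sum fun q _ => hcut q
    _ = ∑ u, ∑ v ∈ (cls ⟦u⟧)ᶜ, w u v := by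
        rw [← sum_fiberwise univ (Quotient.mk s)]
        refine sum_congr rfl fun q _ => sum_congr rfl fun u hu => ?_
        rw [(mem_filter.1 hu).2]
    _ = ∑ e : V × V with ¬ s e.1 e.2, w e.1 e.2 := by
        rw [sum_filter, Fintype.sum_prod_type]
        refine sum_congr rfl fun u _ => ?_
        rw [← sum_filter]
        congr 1
        ext v
        simp [cls, Quotient.eq, Setoid.comm' s]

end Cuts

section TreePacking

variable {V : Type*} [Fintype V] [DecidableEq V] {w : V → V → ℝ} {lam : ℝ}

theorem numComponents_mul_le_sum_compl (hnn : ∀ u v, 0 ≤ w u v)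
    (hlb : ∀ S : Finset V, S.Nonempty → S ≠ univ → lam ≤ cutWeight w S)
    {F : Finset (V × V)} (hF : edgeSetoid F ≠ ⊤) :
    numComponents F * lam ≤ ∑ e ∈ Fᶜ, w e.1 e.2 := by
  classical
  refine (card_quotient_mul_le_sum_not_rel hlb hF).trans
    (sum_le_sum_of_subset_of_nonneg (fun e he => ?_) fun e _ _ => hnn e.1 e.2)
  exact mem_compl.2 fun heF => (mem_filter.1 he).2 (edgeSetoid_rel_of_mem heF)

variable [Nonempty V]

theorem exists_spanningTree_sum_le (hnn : ∀ u v, 0 ≤ w u v) (hlam : 0 < lam)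
    (hlb : ∀ S : Finset V, S.Nonempty → S ≠ univ → lam ≤ cutWeight w S)
    (c : V × V → ℝ) (hc : ∀ e, 0 ≤ c e) :
    ∃ T ∈ spanningTrees V, ∑ e ∈ T, c e ≤ ∑ e, w e.1 e.2 / lam * c e := by
  obtain ⟨T, -, hT, hcard, hlayer⟩ := exists_kruskal_extension c ∅
  rw [numComponents_empty, card_empty, zero_add, Nat.card_eq_fintype_card] at hcard
  refine ⟨T, mem_spanningTrees.2 ⟨hT, by omega⟩, ?_⟩
  have hstep (t : ℝ) : (#{e ∈ T | t < c e} : ℝ) ≤ ∑ e with t < c e, w e.1 e.2 / lam := by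
    have hlayer := hlayer t
    rw [sdiff_empty, empty_union] at hlayer
    by_cases hG : edgeSetoid ({e | c e ≤ t} : Finset (V × V)) = ⊤
    · have := numComponents_le_one_iff.2 hG
      have hzero : #{e ∈ T | t < c e} = 0 := by omega
      simpa [hzero] using sum_nonneg fun e _ => div_nonneg (hnn e.1 e.2) hlam.le
    · have hbound := numComponents_mul_le_sum_compl hnn hlb hG
      simp only [compl_filter, not_le] at hbound
      rw [← le_div_iff₀ hlam, sum_div] at hbound
      have : (#{e ∈ T | t < c e} : ℝ) + 1 ≤
          numComponents ({e | c e ≤ t} : Finset (V × V)) := by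
        exact_mod_cast hlayer
      linarith
  simpa using sum_mul_le_sum_mul_of_sum_filter_lt_le T (fun _ => 1) c univ
    (fun e => w e.1 e.2 / lam) hc fun t _ => by simpa using hstep t

theorem exists_fractional_spanningTree_packing (hnn : ∀ u v, 0 ≤ w u v) (hlam : 0 < lam)
    (hlb : ∀ S : Finset V, S.Nonempty → S ≠ univ → lam ≤ cutWeight w S) :
    ∃ μ ∈ stdSimplex ℝ (spanningTrees V),
      ∀ e : V × V, ∑ T : spanningTrees V with e ∈ T.1, μ T ≤ w e.1 e.2 / lam := by
  classical
  let x : Matrix (spanningTrees V) (V × V) ℝ := fun T e =>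
    (if e ∈ T.1 then 1 else 0) - w e.1 e.2 / lam
  obtain ⟨μ, hμ, hx⟩ := x.exists_mem_stdSimplex_vecMul_nonpos fun c hc => by
    obtain ⟨T, hT, hle⟩ := exists_spanningTree_sum_le hnn hlam hlb c hc
    refine ⟨⟨T, hT⟩, ?_⟩
    simp only [x, mulVec, dotProduct, sub_mul, sum_sub_distrib, ite_mul, one_mul, zero_mul,
      sum_ite_mem, univ_inter]
    linarith
  refine ⟨μ, hμ, fun e => ?_⟩
  have := hx e
  simp only [x, vecMul, dotProduct, mul_sub, sum_sub_distrib, mul_ite, mul_one, mul_zero,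
    ← sum_mul, hμ.2, one_mul, Pi.zero_apply, sub_nonpos] at this
  rwa [sum_filter]

end TreePacking

section CutCounting

variable {V : Type*} [Fintype V] [DecidableEq V] {w : V → V → ℝ} {lam : ℝ}

theorem eq_of_inter_edgeBoundary_eq {T : Finset (V × V)} (hT : edgeSetoid T = ⊤) {z : V}
    {S S' : Finset V} (hS : z ∈ S) (hS' : z ∈ S')
    (h : T ∩ edgeBoundary S = T ∩ edgeBoundary S') : S = S' := by
  -- No tree edge separates the set where `S` and `S'` agree from its complement.
  have hker : edgeSetoid T ≤ Setoid.ker fun v => (v ∈ S ↔ v ∈ S') := by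
    refine edgeSetoid_le_iff.2 fun e he => propext ?_
    have := congrArg (e ∈ ·) h
    simp only [mem_inter, he, true_and, mem_edgeBoundary, eq_iff_iff] at this
    tauto
  rw [hT] at hker
  ext v
  have hv : (v ∈ S ↔ v ∈ S') = (z ∈ S ↔ z ∈ S') := Setoid.ker_def.1 (hker trivial)
  exact hv ▸ iff_of_true hS hS'

theorem card_filter_card_inter_edgeBoundary_le {T : Finset (V × V)} (hT : edgeSetoid T = ⊤)
    (z : V) (k : ℕ) :
    #{S : Finset V | z ∈ S ∧ #(T ∩ edgeBoundary S) ≤ k} ≤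
      #{F ∈ T.powerset | #F ≤ k} := by
  refine card_le_card_of_injOn (fun S => T ∩ edgeBoundary S) (fun S hS => ?_) fun S hS S' hS' h =>
    eq_of_inter_edgeBoundary_eq hT (mem_filter.1 hS).2.1 (mem_filter.1 hS').2.1 h
  simpa using (mem_filter.1 hS).2.2

theorem sum_mul_card_inter_edgeBoundary_le (hsymm : ∀ u v, w u v = w v u)
    {μ : spanningTrees V → ℝ}
    (hμ : ∀ e : V × V, ∑ T : spanningTrees V with e ∈ T.1, μ T ≤ w e.1 e.2 / lam)
    (S : Finset V) :
    ∑ T, μ T * #(T.1 ∩ edgeBoundary S) ≤ 2 * cutWeight w S / lam :=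
  calc ∑ T, μ T * #(T.1 ∩ edgeBoundary S)
        = ∑ e ∈ edgeBoundary S, ∑ T : spanningTrees V with e ∈ T.1, μ T := by
        simp only [inter_comm _ (edgeBoundary S), ← filter_mem_eq_inter, card_filter,
          Nat.cast_sum, Nat.cast_ite, Nat.cast_one, Nat.cast_zero, mul_sum, mul_ite, mul_one,
          mul_zero, sum_filter]
        exact sum_comm
    _ ≤ ∑ e ∈ edgeBoundary S, w e.1 e.2 / lam := sum_le_sum fun e _ => hμ e
    _ = 2 * cutWeight w S / lam := by rw [← sum_div, sum_edgeBoundary w hsymm]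

theorem card_approxMinCuts_le [Nonempty V] (hsymm : ∀ u v, w u v = w v u)
    (hnn : ∀ u v, 0 ≤ w u v) (hlam : 0 < lam)
    (hlb : ∀ S : Finset V, S.Nonempty → S ≠ univ → lam ≤ cutWeight w S)
    (α : ℝ) (z : V) :
    (#{S : Finset V | z ∈ S ∧ cutWeight w S ≤ α * lam} : ℝ) ≤
      (⌊2 * α⌋₊ + 1) ^ 2 / (⌊2 * α⌋₊ + 1 - 2 * α) *
        (Fintype.card V : ℝ) ^ ⌊2 * α⌋₊ := by
  set k := ⌊2 * α⌋₊
  obtain ⟨μ, hμ, hedge⟩ := exists_fractional_spanningTree_packing hnn hlam hlb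
  have hX : ∀ S ∈ ({S | z ∈ S ∧ cutWeight w S ≤ α * lam} : Finset (Finset V)),
      ∑ T, μ T * #(T.1 ∩ edgeBoundary S) ≤ 2 * α := fun S hS => by
    refine (sum_mul_card_inter_edgeBoundary_le hsymm hedge S).trans ?_
    rw [div_le_iff₀ hlam]
    linarith [(mem_filter.1 hS).2.2]
  have hN (T : spanningTrees V) :
      #{S ∈ ({S | z ∈ S ∧ cutWeight w S ≤ α * lam} : Finset (Finset V)) |
        #(T.1 ∩ edgeBoundary S) ≤ k} ≤ (k + 1) * Fintype.card V ^ k := by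
    obtain ⟨hT, hcard⟩ := mem_spanningTrees.1 T.2
    refine (card_le_card fun S hS => ?_).trans
      ((card_filter_card_inter_edgeBoundary_le hT z k).trans
        (card_powerset_filter_card_le T.1 k Fintype.card_pos hcard.le))
    simp only [mem_filter, mem_univ, true_and] at hS ⊢
    exact ⟨hS.1.1, hS.2⟩
  calc _ ≤ (k + 1) / (k + 1 - 2 * α) * ((k + 1) * Fintype.card V ^ k : ℕ) :=
        card_le_of_forall_sum_mul_le hμ _ (fun S T => #(T.1 ∩ edgeBoundary S))
          (by exact_mod_cast Nat.lt_floor_add_one (2 * α)) hX hN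
    _ = _ := by push_cast; ring

end CutCounting

/-- For every real `α ≥ 1` there exists a constant `C = C(α)` such that for
every `n ≥ 2` and every undirected weighted graph on `n` vertices (given by a symmetric,
nonnegative, loopless weight function `w`) whose minimum cut value `lam` is strictly
positive, the number of unordered cuts `{S, V \ S}` of value at most `α·lam` is at most
`C · n ^ ⌊2α⌋`.  Unordered cuts are counted via their unique side containing vertex `0`. -/
theorem stmt0 :
    ∀ α : ℝ, 1 ≤ α → ∃ C : ℝ, 0 < C ∧
      ∀ (n : ℕ) (hn : 2 ≤ n),
      ∀ w : Fin n → Fin n → ℝ,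
        (∀ u v, w u v = w v u) →
        (∀ u v, 0 ≤ w u v) →
        (∀ v, w v v = 0) →
      ∀ lam : ℝ,
        IsLeast {c : ℝ | ∃ S : Finset (Fin n), S.Nonempty ∧ S ≠ Finset.univ ∧
          c = ∑ u ∈ S, ∑ v ∈ Sᶜ, w u v} lam →
        0 < lam →
        (({S : Finset (Fin n) | (⟨0, by omega⟩ : Fin n) ∈ S ∧ S ≠ Finset.univ ∧
            (∑ u ∈ S, ∑ v ∈ Sᶜ, w u v) ≤ α * lam}.ncard : ℝ))
          ≤ C * (n : ℝ) ^ (⌊2 * α⌋₊) := by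
  intro α _
  have hk : 2 * α < ⌊2 * α⌋₊ + 1 := Nat.lt_floor_add_one _
  refine ⟨(⌊2 * α⌋₊ + 1) ^ 2 / (⌊2 * α⌋₊ + 1 - 2 * α),
    div_pos (by positivity) (by linarith),
    fun n hn w hsymm hnn _ lam hleast hlam => ?_⟩
  have : Nonempty (Fin n) := ⟨⟨0, by omega⟩⟩
  have hcount := card_approxMinCuts_le hsymm hnn hlam
    (fun S hS hSu => hleast.2 ⟨S, hS, hSu, rfl⟩) α ⟨0, by omega⟩
  rw [Fintype.card_fin] at hcount
  refine le_trans (Nat.cast_le.2 ?_) hcount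
  rw [← Set.ncard_coe_finset]
  exact Set.ncard_le_ncard (fun S hS => by rw [coe_filter]; exact ⟨mem_univ S, hS.1, hS.2.2⟩)
    (Set.toFinite _)
end

section
/- There exist absolute constants c > 0 and C > 0 such that the following holds. Let G = (V, E) be a connected simple unweighted graph on n ≥ 2 vertices with m = |E| edges whose minimum cut value s satisfies s ≥ c·log n. Let h = ⌈C·m·(log n)/s⌉ and suppose h ≤ m. If H is a uniformly random h-element subset of E, then with probability at least 9/10 the following holds simultaneously for every S with ∅ ⊂ S ⊂ V: the rescaled sampled cut value (m/h)·|H ∩ E(S, V∖S)| lies in the interval [|E(S, V∖S)|/1.1, 1.1·|E(S, V∖S)|]. -/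
/-!
Fix a proper cut `T` with `f` crossing edges. The number `X = |H ∩ E(T, V∖T)|` of sampled cut edges
is hypergeometric with mean `μ = h f / m ≥ C f log n / s`. An exchange argument shows that its
moment generating function is dominated by the binomial one, which gives the Chernoff bound
`P(X ∉ [μ / 1.1, 1.1 μ]) ≤ 2 exp (-μ / 500)`. A deterministic form of Karger's contraction argument
shows that a graph with minimum cut `s` has at most `n ^ (5 a)` cuts of value at most `a s`.
Grouping the cuts by `⌊f / s⌋`, the union bound gives a failure probability of at most
`2 ∑_{a ≥ 1} n ^ (10 a) n ^ (-20 a) ≤ 1 / 10` for `C = 10000`.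
-/

def cutEdges {V : Type*} (G : SimpleGraph V) (S : Set V) : Set (Sym2 V) :=
  {e | e ∈ G.edgeSet ∧ ∃ u v, u ∈ S ∧ v ∉ S ∧ e = s(u, v)}

open Finset Real

theorem one_add_sub_one_mul_div_nonneg {t : ℝ} (ht : 0 ≤ t) {h m : ℕ} (hhm : h ≤ m) :
    0 ≤ 1 + (t - 1) * h / m := by
  have h1 : (h : ℝ) / m ≤ 1 := div_le_one_of_le₀ (by exact_mod_cast hhm) (Nat.cast_nonneg _)
  have h0 : 0 ≤ (h : ℝ) / m := by positivity
  rw [mul_div_assoc]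
  nlinarith

section Sampling

variable {α : Type*} [DecidableEq α] {E F : Finset α} {h : ℕ}

theorem sum_exchange {x : α} (hxE : x ∈ E) (g : Finset α → ℝ) :
    ∑ p ∈ ((E.powersetCard h).filter (x ∈ ·)).sigma (E \ ·), g (insert p.2 (p.1.erase x))
      = ∑ p ∈ ((E.powersetCard h).filter (x ∉ ·)).sigma (fun H => H), g p.1 := by
  refine Finset.sum_nbij' (fun p => ⟨insert p.2 (p.1.erase x), p.2⟩)
    (fun p => ⟨insert x (p.1.erase p.2), p.2⟩) ?_ ?_ ?_ ?_ (fun _ _ => rfl)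
  · rintro ⟨H, y⟩ hp
    simp only [mem_sigma, mem_filter, mem_powersetCard, mem_sdiff] at hp ⊢
    obtain ⟨⟨⟨hHE, rfl⟩, hxH⟩, hyE, hyH⟩ := hp
    have hyx : y ≠ x := by rintro rfl; exact hyH hxH
    refine ⟨⟨⟨insert_subset hyE ((erase_subset x H).trans hHE), ?_⟩, ?_⟩, mem_insert_self y _⟩
    · rw [card_insert_of_notMem (fun hy => hyH (mem_of_mem_erase hy)), card_erase_add_one hxH]
    · simp [hyx.symm]
  · rintro ⟨H, y⟩ hp
    simp only [mem_sigma, mem_filter, mem_powersetCard, mem_sdiff] at hp ⊢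
    obtain ⟨⟨⟨hHE, rfl⟩, hxH⟩, hyH⟩ := hp
    have hxy : x ≠ y := by rintro rfl; exact hxH hyH
    refine ⟨⟨⟨insert_subset hxE ((erase_subset y H).trans hHE), ?_⟩, mem_insert_self x _⟩,
      hHE hyH, ?_⟩
    · rw [card_insert_of_notMem (fun hx => hxH (mem_of_mem_erase hx)), card_erase_add_one hyH]
    · simp [hxy.symm]
  · rintro ⟨H, y⟩ hp
    simp only [mem_sigma, mem_filter, mem_powersetCard, mem_sdiff] at hp
    simp [erase_insert (fun hy => hp.2.2 (mem_of_mem_erase hy)), insert_erase hp.1.2]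
  · rintro ⟨H, y⟩ hp
    simp only [mem_sigma, mem_filter, mem_powersetCard] at hp
    simp [erase_insert (fun hx => hp.1.2 (mem_of_mem_erase hx)), insert_erase hp.2]

/-- Both sides count pairs `(H, y)`, with `x ∈ H, y ∉ H` on the left and `x ∉ H, y ∈ H` on the
right; exchanging `x` for `y` matches them and cannot decrease `#(H ∩ F)` because `x ∉ F`. -/
theorem card_sub_mul_sum_mem_le {x : α} {φ : ℕ → ℝ} (hφ : Monotone φ) (hxE : x ∈ E)
    (hxF : x ∉ F) :
    ((#E - h : ℕ) : ℝ) * ∑ H ∈ (E.powersetCard h).filter (x ∈ ·), φ #(H ∩ F)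
      ≤ h * ∑ H ∈ (E.powersetCard h).filter (x ∉ ·), φ #(H ∩ F) := by
  have hB : ((#E - h : ℕ) : ℝ) * ∑ H ∈ (E.powersetCard h).filter (x ∈ ·), φ #(H ∩ F)
      = ∑ p ∈ ((E.powersetCard h).filter (x ∈ ·)).sigma (E \ ·), φ #(p.1 ∩ F) := by
    rw [sum_sigma, mul_sum]
    refine sum_congr rfl fun H hH => ?_
    simp only [mem_filter, mem_powersetCard] at hH
    simp only [sum_const, card_sdiff_of_subset hH.1.1, hH.1.2, nsmul_eq_mul]
  have hA : (h : ℝ) * ∑ H ∈ (E.powersetCard h).filter (x ∉ ·), φ #(H ∩ F)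
      = ∑ p ∈ ((E.powersetCard h).filter (x ∉ ·)).sigma (fun H => H), φ #(p.1 ∩ F) := by
    rw [sum_sigma, mul_sum]
    refine sum_congr rfl fun H hH => ?_
    simp only [mem_filter, mem_powersetCard] at hH
    simp only [sum_const, hH.1.2, nsmul_eq_mul]
  rw [hA, hB, ← sum_exchange hxE (fun H => φ #(H ∩ F))]
  refine sum_le_sum fun p _ => hφ (card_le_card fun z hz => ?_)
  obtain ⟨hzH, hzF⟩ := mem_inter.1 hz
  exact mem_inter.2 ⟨mem_insert_of_mem (mem_erase.2 ⟨by rintro rfl; exact hxF hzF, hzH⟩), hzF⟩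

theorem sum_pow_card_inter_insert {x : α} (hx : x ∉ F) (t : ℝ) :
    ∑ H ∈ E.powersetCard h, t ^ #(H ∩ insert x F)
      = t * ∑ H ∈ (E.powersetCard h).filter (x ∈ ·), t ^ #(H ∩ F)
        + ∑ H ∈ (E.powersetCard h).filter (x ∉ ·), t ^ #(H ∩ F) := by
  rw [← sum_filter_add_sum_filter_not _ (x ∈ ·), mul_sum]
  congr 1 <;> refine sum_congr rfl fun H hH => ?_ <;> have hxH := (mem_filter.1 hH).2
  · rw [inter_insert_of_mem hxH, card_insert_of_notMem (fun h => hx (mem_inter.1 h).2), pow_succ,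
      mul_comm]
  · rw [inter_insert_of_notMem hxH]

/-- The moment generating function of the hypergeometric variable `#(H ∩ F)` is dominated by that
of the corresponding binomial variable. -/
theorem sum_pow_card_inter_le (hFE : F ⊆ E) (hh : h ≤ #E) {t : ℝ} (ht : 0 ≤ t) :
    ∑ H ∈ E.powersetCard h, t ^ #(H ∩ F) ≤ (1 + (t - 1) * h / #E) ^ #F * (#E).choose h := by
  induction F using Finset.induction_on with
  | empty => simp
  | insert x F hx ih =>
    have hxE : x ∈ E := hFE (mem_insert_self x F)
    have hE : (0 : ℝ) < #E := by exact_mod_cast card_pos.2 ⟨x, hxE⟩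
    set B := ∑ H ∈ (E.powersetCard h).filter (x ∈ ·), t ^ #(H ∩ F)
    set A := ∑ H ∈ (E.powersetCard h).filter (x ∉ ·), t ^ #(H ∩ F)
    have hsum : B + A = ∑ H ∈ E.powersetCard h, t ^ #(H ∩ F) := sum_filter_add_sum_filter_not ..
    have hAB : (t - 1) * ((#E - h) * B - h * A) ≤ 0 := by
      rcases le_total 1 t with ht1 | ht1
      · have := card_sub_mul_sum_mem_le (pow_right_mono₀ ht1) hxE hx (h := h)
        rw [Nat.cast_sub hh] at this
        nlinarith
      · have := card_sub_mul_sum_mem_le (φ := fun k => -t ^ k)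
          (fun _ _ hkl => neg_le_neg (pow_le_pow_of_le_one ht ht1 hkl)) hxE hx (h := h)
        simp only [sum_neg_distrib, Nat.cast_sub hh] at this
        nlinarith
    calc ∑ H ∈ E.powersetCard h, t ^ #(H ∩ insert x F) = t * B + A :=
          sum_pow_card_inter_insert hx t
      _ ≤ (1 + (t - 1) * h / #E) * (B + A) := by
          rw [add_div' _ _ _ hE.ne', div_mul_eq_mul_div, le_div_iff₀ hE]
          nlinarith
      _ ≤ (1 + (t - 1) * h / #E) * ((1 + (t - 1) * h / #E) ^ #F * (#E).choose h) := by
          rw [hsum]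
          exact mul_le_mul_of_nonneg_left (ih ((subset_insert x F).trans hFE))
            (one_add_sub_one_mul_div_nonneg ht hh)
      _ = (1 + (t - 1) * h / #E) ^ #(insert x F) * (#E).choose h := by
          rw [card_insert_of_notMem hx, pow_succ]
          ring

/-- Markov's inequality applied to `t ^ #(H ∩ F)`. -/
theorem card_filter_le_exp (hFE : F ⊆ E) (hh : h ≤ #E) {t : ℝ} (ht : 0 < t) (b : ℝ)
    {p : Finset α → Prop} [DecidablePred p]
    (hp : ∀ H ∈ E.powersetCard h, p H → b * log t ≤ #(H ∩ F) * log t) :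
    (#((E.powersetCard h).filter p) : ℝ)
      ≤ (#E).choose h * exp ((t - 1) * (h * #F / #E) - b * log t) := by
  have hpow : ∀ k : ℕ, exp (k * log t) = t ^ k := fun k => by rw [exp_nat_mul, exp_log ht]
  have hbase : 1 + (t - 1) * h / #E ≤ exp ((t - 1) * h / #E) := by
    linarith [add_one_le_exp ((t - 1) * h / #E)]
  have hmarkov : (#((E.powersetCard h).filter p) : ℝ) * exp (b * log t)
      ≤ ∑ H ∈ E.powersetCard h, t ^ #(H ∩ F) := by
    rw [← nsmul_eq_mul]
    refine (card_nsmul_le_sum _ _ _ fun H hH => ?_).trans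
      (sum_le_sum_of_subset_of_nonneg (filter_subset _ _) fun H _ _ => by positivity)
    rw [← hpow]
    exact exp_le_exp.2 (hp H (mem_filter.1 hH).1 (mem_filter.1 hH).2)
  have hmgf : ∑ H ∈ E.powersetCard h, t ^ #(H ∩ F)
      ≤ exp ((t - 1) * (h * #F / #E)) * (#E).choose h := by
    refine (sum_pow_card_inter_le hFE hh ht.le).trans
      (mul_le_mul_of_nonneg_right ?_ (by positivity))
    calc (1 + (t - 1) * h / #E) ^ #F ≤ exp ((t - 1) * h / #E) ^ #F :=
          pow_le_pow_left₀ (one_add_sub_one_mul_div_nonneg ht.le hh) hbase _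
      _ = exp ((t - 1) * (h * #F / #E)) := by rw [← exp_nat_mul]; ring_nf
  rw [sub_eq_add_neg, exp_add, exp_neg, ← mul_assoc, le_mul_inv_iff₀ (exp_pos _)]
  linarith [hmarkov.trans hmgf]

theorem card_filter_not_approx_le (hFE : F ⊆ E) (h0 : 0 < h) (hh : h ≤ #E) :
    (#((E.powersetCard h).filter fun H =>
        ¬ ((#F : ℝ) / 1.1 ≤ (#E / h) * #(H ∩ F) ∧ (#E / h) * #(H ∩ F) ≤ 1.1 * (#F : ℝ))) : ℝ)
      ≤ 2 * (#E).choose h * exp (-(h * #F / #E) / 500) := by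
  set μ : ℝ := h * #F / #E with hμ
  have hE : (0 : ℝ) < #E := by exact_mod_cast h0.trans_le hh
  have hμ0 : 0 ≤ μ := by positivity
  have hscale : (#E / h : ℝ) * μ = #F := by rw [hμ]; field_simp
  have hsplit : (E.powersetCard h).filter (fun H =>
        ¬ ((#F : ℝ) / 1.1 ≤ (#E / h) * #(H ∩ F) ∧ (#E / h) * #(H ∩ F) ≤ 1.1 * (#F : ℝ)))
      ⊆ (E.powersetCard h).filter (fun H => (#(H ∩ F) : ℝ) < μ / 1.1)
        ∪ (E.powersetCard h).filter (fun H => 1.1 * μ < #(H ∩ F)) := by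
    intro H hH
    simp only [mem_union, mem_filter] at hH ⊢
    by_contra! hX
    refine hH.2 ⟨?_, ?_⟩
    · calc (#F : ℝ) / 1.1 = (#E / h) * (μ / 1.1) := by rw [← hscale]; ring
        _ ≤ (#E / h) * #(H ∩ F) := by gcongr; exact hX.1 hH.1
    · calc (#E / h : ℝ) * #(H ∩ F) ≤ (#E / h) * (1.1 * μ) := by gcongr; exact hX.2 hH.1
        _ = 1.1 * #F := by rw [← hscale]; ring
  -- `t = 19/20` and `t = 21/20` are close enough to the optimal `t = 1.1 ^ (∓1)` for the
  -- elementary bound `1 - t⁻¹ ≤ log t` to give the exponent `-μ / 500`.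
  have hlower := card_filter_le_exp hFE hh (t := 19 / 20) (by norm_num) (μ / 1.1)
    (p := fun H => (#(H ∩ F) : ℝ) < μ / 1.1)
    fun H _ hX => mul_le_mul_of_nonpos_right hX.le (log_nonpos (by norm_num) (by norm_num))
  have hupper := card_filter_le_exp hFE hh (t := 21 / 20) (by norm_num) (1.1 * μ)
    (p := fun H => 1.1 * μ < #(H ∩ F))
    fun H _ hX => mul_le_mul_of_nonneg_right hX.le (log_nonneg (by norm_num))
  rw [← hμ] at hlower hupper
  have hlog19 := one_sub_inv_le_log_of_pos (x := 19 / 20) (by norm_num)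
  have hlog21 := one_sub_inv_le_log_of_pos (x := 21 / 20) (by norm_num)
  norm_num at hlog19 hlog21
  have hexp19 : exp ((19 / 20 - 1) * μ - μ / 1.1 * log (19 / 20)) ≤ exp (-μ / 500) :=
    exp_le_exp.2 (by norm_num; nlinarith [mul_le_mul_of_nonneg_left hlog19 hμ0])
  have hexp21 : exp ((21 / 20 - 1) * μ - 1.1 * μ * log (21 / 20)) ≤ exp (-μ / 500) :=
    exp_le_exp.2 (by norm_num; nlinarith [mul_le_mul_of_nonneg_left hlog21 hμ0])
  have hC : (0 : ℝ) ≤ (#E).choose h := by positivity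
  have hcount := (Nat.cast_le (α := ℝ)).2 ((card_le_card hsplit).trans (card_union_le _ _))
  push_cast at hcount
  nlinarith [mul_le_mul_of_nonneg_left hexp19 hC, mul_le_mul_of_nonneg_left hexp21 hC]

end Sampling

/- A labelling `c : V → β` stands for the partition of `V` into the fibres of `c`, i.e. for the
vertex set of a contracted graph; `mergeClass c u v` contracts an edge `uv`. -/

def IsSaturated {V β : Type*} (c : V → β) (T : Finset V) : Prop :=
  ∀ u v, c u = c v → (u ∈ T ↔ v ∈ T)

def mergeClass {V β : Type*} [DecidableEq β] (c : V → β) (u v : V) : V → β :=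
  fun w => if c w = c u then c v else c w

instance {V β : Type*} [Fintype V] [DecidableEq V] [DecidableEq β] (c : V → β) :
    DecidablePred (IsSaturated c) := fun T => by
  unfold IsSaturated
  infer_instance

section Merge

variable {V β : Type*} [DecidableEq β] {c : V → β} {u v : V}

theorem image_mergeClass [Fintype V] (huv : c u ≠ c v) :
    univ.image (mergeClass c u v) = (univ.image c).erase (c u) := by
  ext k
  simp only [mem_image, mem_erase, mem_univ, true_and, mergeClass]
  constructor
  · rintro ⟨w, rfl⟩
    split_ifs with hw
    · exact ⟨huv.symm, v, rfl⟩
    · exact ⟨hw, w, rfl⟩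
  · rintro ⟨hk, w, rfl⟩
    exact ⟨w, if_neg hk⟩

theorem card_image_mergeClass [Fintype V] (huv : c u ≠ c v) :
    #(univ.image (mergeClass c u v)) = #(univ.image c) - 1 := by
  rw [image_mergeClass huv, card_erase_of_mem (mem_image_of_mem c (mem_univ u))]

theorem IsSaturated.mergeClass {T : Finset V} (hT : IsSaturated c T) (huv : u ∈ T ↔ v ∈ T) :
    IsSaturated (mergeClass c u v) T := by
  intro x y hxy
  simp only [_root_.mergeClass] at hxy
  split_ifs at hxy with hx hy hy
  · exact hT x y (hx.trans hy.symm)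
  · exact (hT x u hx).trans (huv.trans (hT v y hxy))
  · exact (hT x v hxy).trans (huv.symm.trans (hT u y hy.symm))
  · exact hT x y hxy

end Merge

def properCuts (V : Type*) [Fintype V] [DecidableEq V] : Finset (Finset V) :=
  univ.filter fun T => T.Nonempty ∧ Tᶜ.Nonempty

theorem mem_properCuts {V : Type*} [Fintype V] [DecidableEq V] {T : Finset V} :
    T ∈ properCuts V ↔ T.Nonempty ∧ Tᶜ.Nonempty := by
  simp [properCuts]

namespace SimpleGraph

variable {V β : Type*} [Fintype V] [DecidableEq V] [DecidableEq β] (G : SimpleGraph V) {s : ℕ}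

def outPairs [DecidableRel G.Adj] (T : Finset V) : Finset (V × V) :=
  univ.filter fun p => G.Adj p.1 p.2 ∧ p.1 ∈ T ∧ p.2 ∉ T

def crossPairs [DecidableRel G.Adj] (c : V → β) : Finset (V × V) :=
  univ.filter fun p => G.Adj p.1 p.2 ∧ c p.1 ≠ c p.2

noncomputable def smallCuts (b : ℕ) (c : V → β) : Finset (Finset V) :=
  univ.filter fun T => IsSaturated c T ∧ T.Nonempty ∧ Tᶜ.Nonempty ∧ (cutEdges G T).ncard ≤ b

theorem card_outPairs [DecidableRel G.Adj] (T : Finset V) :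
    #(G.outPairs T) = (cutEdges G T).ncard := by
  have himage : cutEdges G T = ↑((G.outPairs T).image fun p => s(p.1, p.2)) := by
    ext e
    simp only [cutEdges, outPairs, coe_image, coe_filter, mem_coe, mem_univ, true_and,
      Set.mem_ofPred_eq, Set.mem_image, Prod.exists]
    constructor
    · rintro ⟨he, u, v, hu, hv, rfl⟩
      exact ⟨u, v, ⟨he, hu, hv⟩, rfl⟩
    · rintro ⟨u, v, ⟨huv, hu, hv⟩, rfl⟩
      exact ⟨huv, u, v, hu, hv, rfl⟩
  rw [himage, Set.ncard_coe_finset, card_image_of_injOn]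
  rintro ⟨u, v⟩ huv ⟨u', v'⟩ huv' he
  simp only [outPairs, coe_filter, mem_univ, true_and, Set.mem_ofPred_eq] at huv huv'
  rcases Sym2.eq_iff.1 he with ⟨rfl, rfl⟩ | ⟨rfl, rfl⟩
  · rfl
  · exact absurd huv.2.1 huv'.2.2

theorem card_smallCuts_le_two_pow (b : ℕ) (c : V → β) :
    #(G.smallCuts b c) ≤ 2 ^ #(univ.image c) := by
  rw [← card_powerset]
  refine card_le_card_of_injOn (fun T => T.image c) (fun T _ => ?_) fun T hT T' hT' hTT' => ?_
  · exact mem_powerset.2 (image_subset_image (subset_univ T))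
  · have hmem : ∀ S ∈ G.smallCuts b c, ∀ x, x ∈ S ↔ c x ∈ S.image c := fun S hS x =>
      ⟨mem_image_of_mem c, fun hx => by
        obtain ⟨y, hy, hyx⟩ := mem_image.1 hx
        exact ((mem_filter.1 hS).2.1 y x hyx).1 hy⟩
    ext x
    rw [hmem T hT, hmem T' hT', show T.image c = T'.image c from hTT']

theorem smallCuts_filter_subset_mergeClass (b : ℕ) (c : V → β) (u v : V) :
    (G.smallCuts b c).filter (fun T => u ∈ T ↔ v ∈ T) ⊆ G.smallCuts b (mergeClass c u v) := by
  intro T hT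
  simp only [smallCuts, mem_filter, mem_univ, true_and] at hT ⊢
  exact ⟨hT.1.1.mergeClass hT.2, hT.1.2⟩

variable {G} [DecidableRel G.Adj]

theorem card_image_mul_le_card_crossPairs {c : V → β} (hc : 2 ≤ #(univ.image c))
    (hcut : ∀ T : Finset V, T.Nonempty → Tᶜ.Nonempty → s ≤ (cutEdges G T).ncard) :
    #(univ.image c) * s ≤ #(G.crossPairs c) := by
  rw [card_eq_sum_card_fiberwise (f := fun p : V × V => c p.1) (t := univ.image c)
    (by intro p _; exact mem_image_of_mem c (mem_univ _)), ← smul_eq_mul]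
  refine card_nsmul_le_sum _ _ _ fun k hk => ?_
  obtain ⟨x, -, rfl⟩ := mem_image.1 hk
  obtain ⟨y, -, hy⟩ : ∃ y ∈ univ, c y ≠ c x := by
    by_contra! hall
    have : univ.image c ⊆ {c x} := fun k hk => by
      obtain ⟨y, -, rfl⟩ := mem_image.1 hk
      exact mem_singleton.2 (hall y (mem_univ y))
    have := card_le_card this
    rw [card_singleton] at this
    omega
  have hfiber : (G.crossPairs c).filter (fun p => c p.1 = c x)
      = G.outPairs (univ.filter fun w => c w = c x) := by
    ext ⟨u, w⟩
    simp only [crossPairs, outPairs, mem_filter, mem_univ, true_and]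
    constructor
    · rintro ⟨⟨huw, hne⟩, hu⟩
      exact ⟨huw, hu, fun hw => hne (hu.trans hw.symm)⟩
    · rintro ⟨huw, hu, hw⟩
      exact ⟨⟨huw, fun h => hw (h ▸ hu)⟩, hu⟩
  rw [hfiber, card_outPairs]
  exact hcut _ ⟨x, by simp⟩ ⟨y, by simp [hy]⟩

theorem card_crossPairs_sub_le_card_filter (c : V → β) {T : Finset V} {b : ℕ}
    (hT : (cutEdges G T).ncard ≤ b) :
    #(G.crossPairs c) - 2 * b ≤ #((G.crossPairs c).filter fun p => p.1 ∈ T ↔ p.2 ∈ T) := by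
  have hsub : (G.crossPairs c).filter (fun p => ¬(p.1 ∈ T ↔ p.2 ∈ T))
      ⊆ G.outPairs T ∪ (G.outPairs T).image Prod.swap := by
    rintro ⟨u, w⟩ hp
    simp only [crossPairs, outPairs, mem_filter, mem_univ, true_and, mem_union, mem_image,
      Prod.exists, Prod.swap_prod_mk, Prod.mk.injEq] at hp ⊢
    by_cases hu : u ∈ T
    · exact Or.inl ⟨hp.1.1, hu, fun hw => hp.2 (iff_of_true hu hw)⟩
    · exact Or.inr ⟨w, u, ⟨hp.1.1.symm, by tauto, hu⟩, rfl, rfl⟩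
  have hcross := (card_le_card hsub).trans ((card_union_le _ _).trans
    (Nat.add_le_add_left card_image_le _))
  rw [card_outPairs] at hcross
  have := card_filter_add_card_filter_not (s := G.crossPairs c) (fun p => p.1 ∈ T ↔ p.2 ∈ T)
  omega

/-- Averaged over the edges between different classes, contracting an edge keeps a large fraction
of the small cuts: a small cut is crossed by few of these edges, while every class sends out at
least `s` of them. -/
theorem exists_mergeClass_card_smallCuts (hs : 0 < s)
    (hcut : ∀ T : Finset V, T.Nonempty → Tᶜ.Nonempty → s ≤ (cutEdges G T).ncard) {a b : ℕ}
    (hb : b ≤ a * s) {c : V → β} (hc : 2 * a + 2 ≤ #(univ.image c)) :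
    ∃ u v, c u ≠ c v ∧ #(G.smallCuts b c) * (#(univ.image c) - 2 * a)
      ≤ #(univ.image c) * #(G.smallCuts b (mergeClass c u v)) := by
  set R := #(univ.image c)
  set M := #(G.crossPairs c)
  set N := #(G.smallCuts b c)
  have hRM : R * s ≤ M := card_image_mul_le_card_crossPairs (by omega) hcut
  have hM : 0 < M := lt_of_lt_of_le (Nat.mul_pos (by omega) hs) hRM
  have hsum : N * (M - 2 * b) ≤ ∑ p ∈ G.crossPairs c, #(G.smallCuts b (mergeClass c p.1 p.2)) :=
    calc N * (M - 2 * b)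
        ≤ ∑ T ∈ G.smallCuts b c, #((G.crossPairs c).filter fun p => p.1 ∈ T ↔ p.2 ∈ T) := by
          rw [← smul_eq_mul]
          refine card_nsmul_le_sum _ _ _ fun T hT => card_crossPairs_sub_le_card_filter c ?_
          simp only [smallCuts, mem_filter] at hT
          exact hT.2.2.2.2
      _ = ∑ p ∈ G.crossPairs c, #((G.smallCuts b c).filter fun T => p.1 ∈ T ↔ p.2 ∈ T) :=
          (sum_card_bipartiteAbove_eq_sum_card_bipartiteBelow _).symm
      _ ≤ _ := sum_le_sum fun p _ => card_le_card (G.smallCuts_filter_subset_mergeClass b c _ _)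
  obtain ⟨p, hp, hpN⟩ := exists_le_of_sum_le (card_pos.1 hM)
    (f := fun _ => N * (M - 2 * b)) (g := fun p => M * #(G.smallCuts b (mergeClass c p.1 p.2)))
    (by rw [sum_const, smul_eq_mul, ← mul_sum]; exact Nat.mul_le_mul_left M hsum)
  refine ⟨p.1, p.2, (mem_filter.1 hp).2.2, Nat.le_of_mul_le_mul_right ?_ hM⟩
  have hRb : R * b ≤ a * M :=
    calc R * b ≤ R * (a * s) := Nat.mul_le_mul_left R hb
      _ = a * (R * s) := by ring
      _ ≤ a * M := Nat.mul_le_mul_left a hRM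
  have h2b : 2 * b ≤ M := by nlinarith
  have hshift : (R - 2 * a) * M ≤ R * (M - 2 * b) := by
    zify [h2b, (by omega : 2 * a ≤ R)]
    linarith
  calc N * (R - 2 * a) * M = N * ((R - 2 * a) * M) := by ring
    _ ≤ N * (R * (M - 2 * b)) := Nat.mul_le_mul_left N hshift
    _ = R * (N * (M - 2 * b)) := by ring
    _ ≤ R * (M * #(G.smallCuts b (mergeClass c p.1 p.2))) := Nat.mul_le_mul_left R hpN
    _ = _ := by ring

theorem card_smallCuts_le_two_pow_mul_choose (hs : 0 < s)
    (hcut : ∀ T : Finset V, T.Nonempty → Tᶜ.Nonempty → s ≤ (cutEdges G T).ncard) {a b : ℕ}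
    (hb : b ≤ a * s) (c : V → β) (hc : 2 * a ≤ #(univ.image c)) :
    #(G.smallCuts b c) ≤ 2 ^ (2 * a + 1) * (#(univ.image c)).choose (2 * a) := by
  have hfew : ∀ c : V → β, 2 * a ≤ #(univ.image c) → #(univ.image c) ≤ 2 * a + 1 →
      #(G.smallCuts b c) ≤ 2 ^ (2 * a + 1) * (#(univ.image c)).choose (2 * a) := fun c hc hc' =>
    calc #(G.smallCuts b c) ≤ 2 ^ #(univ.image c) := G.card_smallCuts_le_two_pow b c
      _ ≤ 2 ^ (2 * a + 1) * 1 := by rw [mul_one]; exact Nat.pow_le_pow_right two_pos hc'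
      _ ≤ _ := Nat.mul_le_mul_left _ (Nat.choose_pos hc)
  obtain ⟨k, hk⟩ := Nat.exists_eq_add_of_le hc
  induction k generalizing c with
  | zero => exact hfew c hc (by omega)
  | succ k ih =>
    rcases k.eq_zero_or_pos with rfl | hk0
    · exact hfew c hc (by omega)
    obtain ⟨u, v, huv, hstep⟩ := exists_mergeClass_card_smallCuts hs hcut hb (c := c) (by omega)
    have hmerge : #(univ.image (mergeClass c u v)) = 2 * a + k := by
      rw [card_image_mergeClass huv, hk]; rfl
    have hIH := ih _ (by omega) hmerge
    rw [hmerge] at hIH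
    rw [hk, show 2 * a + (k + 1) - 2 * a = k + 1 by omega] at hstep
    rw [hk]
    refine Nat.le_of_mul_le_mul_right ?_ k.succ_pos
    calc #(G.smallCuts b c) * (k + 1)
        ≤ (2 * a + k + 1) * (2 ^ (2 * a + 1) * (2 * a + k).choose (2 * a)) :=
          hstep.trans (Nat.mul_le_mul_left _ hIH)
      _ = 2 ^ (2 * a + 1) * (2 * a + (k + 1)).choose (2 * a) * (k + 1) := by
          have hpascal := Nat.choose_mul_succ_eq (2 * a + k) (2 * a)
          rw [show 2 * a + k + 1 - 2 * a = k + 1 by omega] at hpascal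
          rw [← add_assoc, mul_assoc _ _ (k + 1), ← hpascal]
          ring

theorem card_smallCuts_id_le (hV : 0 < Fintype.card V) (hs : 0 < s)
    (hcut : ∀ T : Finset V, T.Nonempty → Tᶜ.Nonempty → s ≤ (cutEdges G T).ncard) (a : ℕ) :
    #(G.smallCuts (a * s) id) ≤ 2 ^ (2 * a + 1) * Fintype.card V ^ (2 * a) := by
  have hid : #(univ.image (id : V → V)) = Fintype.card V := by rw [image_id, card_univ]
  rcases le_or_gt (2 * a) (Fintype.card V) with h2a | h2a
  · refine (card_smallCuts_le_two_pow_mul_choose hs hcut le_rfl id (by rwa [hid])).trans ?_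
    rw [hid]
    exact Nat.mul_le_mul_left _ (Nat.choose_le_pow _ _)
  · calc #(G.smallCuts (a * s) id) ≤ 2 ^ Fintype.card V := hid ▸ G.card_smallCuts_le_two_pow _ _
      _ ≤ 2 ^ (2 * a + 1) * 1 := by rw [mul_one]; exact Nat.pow_le_pow_right two_pos (by omega)
      _ ≤ _ := Nat.mul_le_mul_left _ (Nat.one_le_pow _ _ hV)

theorem card_cuts_le_pow (hV : 2 ≤ Fintype.card V) (hs : 0 < s)
    (hcut : ∀ T : Finset V, T.Nonempty → Tᶜ.Nonempty → s ≤ (cutEdges G T).ncard) {a : ℕ}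
    (ha : 1 ≤ a) :
    #((properCuts V).filter fun T : Finset V => (cutEdges G T).ncard ≤ a * s)
      ≤ Fintype.card V ^ (5 * a) := by
  have hsub : (properCuts V).filter (fun T : Finset V => (cutEdges G T).ncard ≤ a * s)
      ⊆ G.smallCuts (a * s) id := fun T hT => by
    simp only [properCuts, smallCuts, mem_filter, mem_univ, true_and] at hT ⊢
    exact ⟨fun u v huv => by rw [show u = v from huv], hT.1.1, hT.1.2, hT.2⟩
  calc _ ≤ 2 ^ (2 * a + 1) * Fintype.card V ^ (2 * a) :=
        (card_le_card hsub).trans (card_smallCuts_id_le (by omega) hs hcut a)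
    _ ≤ Fintype.card V ^ (3 * a) * Fintype.card V ^ (2 * a) := by
        refine Nat.mul_le_mul_right _ ?_
        calc 2 ^ (2 * a + 1) ≤ 2 ^ (3 * a) := Nat.pow_le_pow_right two_pos (by omega)
          _ ≤ Fintype.card V ^ (3 * a) := Nat.pow_le_pow_left hV _
    _ = Fintype.card V ^ (5 * a) := by rw [← pow_add]; ring_nf

end SimpleGraph

def EstimatesCut {V : Type*} (G : SimpleGraph V) (m h : ℕ) (H : Finset (Sym2 V)) (S : Set V) :
    Prop :=
  ((cutEdges G S).ncard : ℝ) / 1.1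
      ≤ ((m : ℝ) / (h : ℝ)) * (((H : Set (Sym2 V)) ∩ cutEdges G S).ncard : ℝ) ∧
    ((m : ℝ) / (h : ℝ)) * (((H : Set (Sym2 V)) ∩ cutEdges G S).ncard : ℝ)
      ≤ 1.1 * ((cutEdges G S).ncard : ℝ)

noncomputable instance {V : Type*} (G : SimpleGraph V) (m h : ℕ) (H : Finset (Sym2 V))
    (S : Set V) : Decidable (EstimatesCut G m h H S) := by
  unfold EstimatesCut
  infer_instance

theorem cutEdges_subset_edgeSet {V : Type*} (G : SimpleGraph V) (S : Set V) :
    cutEdges G S ⊆ G.edgeSet :=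
  fun _ he => he.1

theorem cutEdges_ncard_le {V : Type*} [Fintype V] (G : SimpleGraph V) [DecidableRel G.Adj]
    (S : Set V) : (cutEdges G S).ncard ≤ #G.edgeFinset := by
  rw [← Set.ncard_coe_finset, SimpleGraph.coe_edgeFinset]
  exact Set.ncard_le_ncard (cutEdges_subset_edgeSet G S) (Set.toFinite _)

theorem exp_neg_ten_mul_log_le {n : ℝ} (hn : 2 ≤ n) : exp (-(10 * log n)) ≤ 1 / 1024 := by
  rw [← log_rpow (by linarith), exp_neg, exp_log (by positivity)]
  calc (n ^ (10 : ℝ))⁻¹ ≤ ((2 : ℝ) ^ (10 : ℝ))⁻¹ := by gcongr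
    _ = 1 / 1024 := by norm_num

section CutSampling

open SimpleGraph

variable {V : Type*} [Fintype V] [DecidableEq V] {G : SimpleGraph V} [DecidableRel G.Adj]
  {s h m : ℕ}

theorem card_filter_not_estimatesCut_le (h0 : 0 < h) (hh : h ≤ #G.edgeFinset) (S : Set V) :
    (#((G.edgeFinset.powersetCard h).filter fun H => ¬ EstimatesCut G #G.edgeFinset h H S) : ℝ)
      ≤ 2 * (#G.edgeFinset).choose h
        * exp (-(h * (cutEdges G S).ncard / #G.edgeFinset) / 500) := by
  obtain ⟨F, hF⟩ := (Set.toFinite (cutEdges G S)).exists_finset_coe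
  have hFE : F ⊆ G.edgeFinset := by
    rw [← coe_subset, hF, SimpleGraph.coe_edgeFinset]
    exact cutEdges_subset_edgeSet G S
  convert card_filter_not_approx_le hFE h0 hh using 5
  · simp only [EstimatesCut, ← hF, ← coe_inter, Set.ncard_coe_finset]
  · rw [← hF, Set.ncard_coe_finset]

theorem card_filter_cutEdges_div_eq_le (hV : 2 ≤ Fintype.card V) (hs : 0 < s)
    (hcut : ∀ T : Finset V, T.Nonempty → Tᶜ.Nonempty → s ≤ (cutEdges G T).ncard) {a : ℕ}
    (ha : 1 ≤ a) :
    #((properCuts V).filter fun T : Finset V => (cutEdges G T).ncard / s = a)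
      ≤ Fintype.card V ^ (10 * a) := by
  refine le_trans (card_le_card fun T hT => ?_)
    ((card_cuts_le_pow hV hs hcut (a := 2 * a) (by omega)).trans_eq (by ring_nf))
  rw [mem_filter] at hT ⊢
  have := (Nat.div_lt_iff_lt_mul hs).1 (hT.2 ▸ Nat.lt_succ_self a)
  exact ⟨hT.1, by nlinarith⟩

theorem sum_filter_cutEdges_div_eq_exp_le (hV : 2 ≤ Fintype.card V) (hs : 0 < s)
    (hcut : ∀ T : Finset V, T.Nonempty → Tᶜ.Nonempty → s ≤ (cutEdges G T).ncard) {a : ℕ}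
    (ha : 1 ≤ a) :
    ∑ T ∈ (properCuts V).filter (fun T : Finset V => (cutEdges G T).ncard / s = a),
        exp (-(20 * log (Fintype.card V) * (cutEdges G T).ncard / s))
      ≤ exp (-(10 * log (Fintype.card V))) ^ a := by
  set L := log (Fintype.card V) with hLdef
  have hL : 0 < L := log_pos (by exact_mod_cast hV)
  have hcount := (Nat.cast_le (α := ℝ)).2 (card_filter_cutEdges_div_eq_le hV hs hcut ha)
  have hpow : ((Fintype.card V ^ (10 * a) : ℕ) : ℝ) = exp (10 * L) ^ a := by
    rw [show 10 * L = log ((Fintype.card V : ℝ) ^ 10) by rw [hLdef, log_pow]; norm_num,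
      exp_log (by positivity), ← pow_mul, Nat.cast_pow]
  calc _ ≤ ∑ T ∈ (properCuts V).filter (fun T : Finset V => (cutEdges G T).ncard / s = a),
        exp (-(10 * L)) ^ (2 * a) := by
        refine sum_le_sum fun T hT => ?_
        have had : (a : ℝ) ≤ (cutEdges G T).ncard / s := (mem_filter.1 hT).2 ▸ Nat.cast_div_le
        rw [← exp_nat_mul, exp_le_exp, mul_div_assoc]
        push_cast
        nlinarith
    _ ≤ exp (10 * L) ^ a * (exp (-(10 * L)) ^ 2) ^ a := by
        rw [sum_const, nsmul_eq_mul, pow_mul, ← hpow]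
        exact mul_le_mul_of_nonneg_right hcount (by positivity)
    _ = exp (-(10 * L)) ^ a := by
        rw [← mul_pow, sq, ← mul_assoc, ← exp_add, add_neg_cancel, exp_zero, one_mul]

/-- Grouping the cuts `T` by `a = ⌊|δT| / s⌋`, there are at most `n ^ (10 a)` of them in group `a`,
each of weight at most `n ^ (-20 a)`. -/
theorem sum_exp_neg_cutEdges_le (hV : 2 ≤ Fintype.card V) (hs : 0 < s)
    (hcut : ∀ T : Finset V, T.Nonempty → Tᶜ.Nonempty → s ≤ (cutEdges G T).ncard) :
    ∑ T ∈ properCuts V, exp (-(20 * log (Fintype.card V) * (cutEdges G T).ncard / s))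
      ≤ 1 / 20 := by
  have hq := exp_neg_ten_mul_log_le (n := Fintype.card V) (by exact_mod_cast hV)
  have hmaps : ∀ T ∈ properCuts V, (cutEdges G T).ncard / s ∈ Ico 1 (#G.edgeFinset + 1) :=
    fun T hT => by
      rw [properCuts, mem_filter] at hT
      exact mem_Ico.2 ⟨(Nat.one_le_div_iff hs).2 (hcut T hT.2.1 hT.2.2),
        Nat.lt_succ_of_le ((Nat.div_le_self _ _).trans (cutEdges_ncard_le G _))⟩
  rw [← sum_fiberwise_of_maps_to hmaps]
  calc _ ≤ ∑ a ∈ Ico 1 (#G.edgeFinset + 1), exp (-(10 * log (Fintype.card V))) ^ a :=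
        sum_le_sum fun a ha => sum_filter_cutEdges_div_eq_exp_le hV hs hcut (mem_Ico.1 ha).1
    _ ≤ exp (-(10 * log (Fintype.card V))) ^ 1 / (1 - exp (-(10 * log (Fintype.card V)))) :=
        geom_sum_Ico_le_of_lt_one (exp_pos _).le (by linarith)
    _ ≤ 1 / 20 := by
        rw [pow_one, div_le_iff₀ (by linarith)]
        linarith

theorem card_filter_not_forall_estimatesCut_le (hV : 2 ≤ Fintype.card V) (hs : 0 < s)
    (hcut : ∀ T : Finset V, T.Nonempty → Tᶜ.Nonempty → s ≤ (cutEdges G T).ncard)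
    (h0 : 0 < h) (hh : h ≤ #G.edgeFinset)
    (hC : 10000 * #G.edgeFinset * log (Fintype.card V) / s ≤ h) :
    (#((G.edgeFinset.powersetCard h).filter fun H =>
        ¬ ∀ T ∈ properCuts V, EstimatesCut G #G.edgeFinset h H T) : ℝ)
      ≤ (#G.edgeFinset).choose h / 10 := by
  set m := #G.edgeFinset
  set L := log (Fintype.card V)
  have hmR : (0 : ℝ) < m := by exact_mod_cast h0.trans_le hh
  have hperT : ∀ T ∈ properCuts V,
      (#((G.edgeFinset.powersetCard h).filter fun H => ¬ EstimatesCut G m h H T) : ℝ)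
        ≤ 2 * m.choose h * exp (-(20 * L * (cutEdges G T).ncard / s)) := fun T _ => by
    refine (card_filter_not_estimatesCut_le h0 hh T).trans
      (mul_le_mul_of_nonneg_left (exp_le_exp.2 ?_) (by positivity))
    rw [neg_div, neg_le_neg_iff]
    calc 20 * L * (cutEdges G T).ncard / s
        = 10000 * m * L / s * (cutEdges G T).ncard / (500 * m) := by field_simp; ring
      _ ≤ h * (cutEdges G T).ncard / (500 * m) := by gcongr
      _ = h * (cutEdges G T).ncard / m / 500 := by ring
  have hbad : (G.edgeFinset.powersetCard h).filter (fun H =>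
        ¬ ∀ T ∈ properCuts V, EstimatesCut G m h H T)
      ⊆ (properCuts V).biUnion fun T =>
        (G.edgeFinset.powersetCard h).filter fun H => ¬ EstimatesCut G m h H T := fun H hH => by
    simp only [mem_filter, not_forall, mem_biUnion] at hH ⊢
    obtain ⟨hH, T, hT, hest⟩ := hH
    exact ⟨T, hT, hH, hest⟩
  calc _ ≤ ∑ T ∈ properCuts V,
        (#((G.edgeFinset.powersetCard h).filter fun H => ¬ EstimatesCut G m h H T) : ℝ) := by
        exact_mod_cast (card_le_card hbad).trans card_biUnion_le
    _ ≤ ∑ T ∈ properCuts V, 2 * m.choose h * exp (-(20 * L * (cutEdges G T).ncard / s)) :=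
        sum_le_sum hperT
    _ ≤ 2 * m.choose h * (1 / 20) := by
        rw [← mul_sum]
        exact mul_le_mul_of_nonneg_left (sum_exp_neg_cutEdges_le hV hs hcut) (by positivity)
    _ = m.choose h / 10 := by ring

theorem card_filter_forall_estimatesCut_ge (hV : 2 ≤ Fintype.card V) (hs : 0 < s)
    (hcut : ∀ T : Finset V, T.Nonempty → Tᶜ.Nonempty → s ≤ (cutEdges G T).ncard)
    (h0 : 0 < h) (hh : h ≤ #G.edgeFinset)
    (hC : 10000 * #G.edgeFinset * log (Fintype.card V) / s ≤ h) :
    9 / 10 * ((#G.edgeFinset).choose h : ℝ) ≤ #((G.edgeFinset.powersetCard h).filter fun H =>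
      ∀ T ∈ properCuts V, EstimatesCut G #G.edgeFinset h H T) := by
  have hbad := card_filter_not_forall_estimatesCut_le hV hs hcut h0 hh hC
  have hsplit := congrArg (Nat.cast (R := ℝ)) (card_filter_add_card_filter_not
    (s := G.edgeFinset.powersetCard h) fun H =>
      ∀ T ∈ properCuts V, EstimatesCut G #G.edgeFinset h H T)
  rw [card_powersetCard] at hsplit
  push_cast at hsplit
  linarith

theorem coe_filter_forall_estimatesCut_subset :
    ↑((G.edgeFinset.powersetCard h).filter fun H => ∀ T ∈ properCuts V, EstimatesCut G m h H T)
      ⊆ {H : Finset (Sym2 V) | ↑H ⊆ G.edgeSet ∧ H.card = h ∧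
          ∀ S : Set V, S.Nonempty → Sᶜ.Nonempty → EstimatesCut G m h H S} := by
  classical
  intro H hH
  simp only [coe_filter, mem_powersetCard, Set.mem_ofPred_eq] at hH
  refine ⟨by rw [← SimpleGraph.coe_edgeFinset]; exact coe_subset.2 hH.1.1, hH.1.2,
    fun S hS hSc => ?_⟩
  have hT := hH.2 S.toFinset (mem_properCuts.2 ⟨Set.toFinset_nonempty.2 hS,
    by rwa [← coe_nonempty, coe_compl, Set.coe_toFinset]⟩)
  rwa [Set.coe_toFinset] at hT

end CutSampling

/-- There are absolute constants `c, C > 0` such that: for every connected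
simple graph `G` on `n ≥ 2` vertices with `m` edges and minimum cut value `s ≥ c·log n`,
with `h = ⌈C·m·(log n)/s⌉ ≤ m`, a uniformly random `h`-element subset `H` of the edges
satisfies, with probability at least `9/10`, simultaneously for every nonempty proper
`S ⊂ V`: `(m/h)·|H ∩ E(S, V∖S)|` lies in `[|E(S,V∖S)|/1.1, 1.1·|E(S,V∖S)|]`.
The probability is expressed as a count of good `h`-subsets over `m choose h`. -/
theorem stmt3 :
    ∃ c C : ℝ, 0 < c ∧ 0 < C ∧
      ∀ (n : ℕ), 2 ≤ n →
      ∀ (G : SimpleGraph (Fin n)), G.Connected →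
      ∀ m : ℕ, m = G.edgeSet.ncard →
      ∀ s : ℕ,
        IsLeast {k : ℕ | ∃ S : Set (Fin n), S.Nonempty ∧ Sᶜ.Nonempty ∧
          k = (cutEdges G S).ncard} s →
        c * Real.log n ≤ (s : ℝ) →
      ∀ h : ℕ, h = ⌈C * (m : ℝ) * Real.log n / (s : ℝ)⌉₊ → h ≤ m →
        (9 : ℝ) / 10 ≤
          (({H : Finset (Sym2 (Fin n)) | ↑H ⊆ G.edgeSet ∧ H.card = h ∧
              ∀ S : Set (Fin n), S.Nonempty → Sᶜ.Nonempty →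
                ((cutEdges G S).ncard : ℝ) / 1.1
                    ≤ ((m : ℝ) / (h : ℝ)) * (((H : Set (Sym2 (Fin n))) ∩ cutEdges G S).ncard : ℝ) ∧
                ((m : ℝ) / (h : ℝ)) * (((H : Set (Sym2 (Fin n))) ∩ cutEdges G S).ncard : ℝ)
                    ≤ 1.1 * ((cutEdges G S).ncard : ℝ)}.ncard : ℝ))
            / ((m.choose h : ℕ) : ℝ) := by
  refine ⟨1, 10000, one_pos, by norm_num, ?_⟩
  intro n hn G _ m hm s hmin hslog h hh hhm
  classical
  have hL : 0 < Real.log n := Real.log_pos (by exact_mod_cast hn)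
  have hs : 0 < s := by exact_mod_cast (by linarith : (0 : ℝ) < s)
  obtain rfl : m = #G.edgeFinset := by rw [hm, ← SimpleGraph.coe_edgeFinset, Set.ncard_coe_finset]
  have hsm : s ≤ #G.edgeFinset := by
    obtain ⟨S, -, -, rfl⟩ := hmin.1
    exact cutEdges_ncard_le G S
  have hC : 10000 * #G.edgeFinset * Real.log (Fintype.card (Fin n)) / s ≤ h := by
    rw [Fintype.card_fin, hh]
    exact Nat.le_ceil _
  have hm0 : 0 < #G.edgeFinset := hs.trans_le hsm
  have h0 : 0 < h := hh ▸ Nat.ceil_pos.2 (by positivity)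
  have hcut : ∀ T : Finset (Fin n), T.Nonempty → Tᶜ.Nonempty → s ≤ (cutEdges G T).ncard :=
    fun T hT hTc => hmin.2 ⟨T, coe_nonempty.2 hT, by rwa [← coe_compl, coe_nonempty], rfl⟩
  have key := card_filter_forall_estimatesCut_ge (by rwa [Fintype.card_fin]) hs hcut h0 hhm hC
  rw [le_div_iff₀ (by exact_mod_cast Nat.choose_pos hhm)]
  refine key.trans ?_
  rw [← Set.ncard_coe_finset]
  exact_mod_cast Set.ncard_le_ncard coe_filter_forall_estimatesCut_subset (Set.toFinite _)
end

section
/- There exists an absolute constant C > 0 such that every simple undirected graph G on n ≥ 2 vertices admits a family 𝒞 of cycles of G that are pairwise edge-disjoint, each cycle having length at most C·(log n)², such that the number of edges of G not contained in any cycle of 𝒞 is at most C·n·log n. -/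
/-!
A graph in which every non-isolated vertex has degree at least `3` has a cycle of length at
most `2k` whenever `n < 2 ^ k` (the Moore bound): otherwise the endpoint of a path of length
`i < k` from a fixed vertex has at most one neighbour on the path, so the number of such paths
at least doubles with each step, while distinct paths of length `k` must end at distinct
vertices, giving `2 ^ k ≤ n`. Stripping vertices of degree `1` or `2` shows that a graph with
more than `2n` edges contains such a subgraph. Hence one may greedily delete cycles of length
at most `2 (log₂ n + 1)` until at most `2n` edges remain, which yields an
`(O(n), O(log n))` short-cycle decomposition.
-/

open Finset

namespace SimpleGraph

variable {V : Type*} {G : SimpleGraph V}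

theorem Walk.exists_support_eq_ofFn {m : ℕ} (p : Fin (m + 1) → V)
    (hp : ∀ i : Fin m, G.Adj (p i.castSucc) (p i.succ)) :
    ∃ w : G.Walk (p 0) (p (Fin.last m)), w.length = m ∧ w.support = List.ofFn p := by
  induction m with
  | zero => exact ⟨nil, rfl, by simp⟩
  | succ m ih =>
    obtain ⟨w, hlen, hsupp⟩ := ih (fun i => p i.succ) (fun i => hp i.succ)
    have h0 : G.Adj (p 0) (p (Fin.succ 0)) := hp 0
    refine ⟨cons h0 (w.copy rfl (congrArg p (Fin.succ_last m))),
      by rw [length_cons, length_copy, hlen], ?_⟩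
    rw [support_cons, support_copy, hsupp]
    exact (List.ofFn_succ (f := p)).symm

theorem egirth_le_length_add_length [DecidableEq V] {u v : V} {p q : G.Walk u v}
    (hp : p.IsPath) (hq : q.IsPath) (hpq : p ≠ q) : G.egirth ≤ p.length + q.length := by
  set H := fromEdgeSet {e | e ∈ p.edges ∨ e ∈ q.edges}
  have hHG : H ≤ G := fun a b hab => by
    rw [fromEdgeSet_adj] at hab
    exact hab.1.elim (p.edges_subset_edgeSet ·) (q.edges_subset_edgeSet ·)
  have hpH : ∀ e ∈ p.edges, e ∈ H.edgeSet := fun e he => by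
    rw [edgeSet_fromEdgeSet]
    exact ⟨Or.inl he, G.not_isDiag_of_mem_edgeSet (p.edges_subset_edgeSet he)⟩
  have hqH : ∀ e ∈ q.edges, e ∈ H.edgeSet := fun e he => by
    rw [edgeSet_fromEdgeSet]
    exact ⟨Or.inr he, G.not_isDiag_of_mem_edgeSet (q.edges_subset_edgeSet he)⟩
  have hH : ¬ H.IsAcyclic := fun hacyc => hpq <| by
    have := (hacyc.subsingleton_path u v).elim ⟨_, hp.transfer hpH⟩ ⟨_, hq.transfer hqH⟩
    simpa [Walk.transfer_self] using congrArg (fun r : H.Path u v =>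
      r.1.transfer G fun e he => edgeSet_mono hHG (r.1.edges_subset_edgeSet he)) this
  obtain ⟨a, c, hc, hcH⟩ := exists_egirth_eq_length.mpr hH
  have hcedges : c.edges.toFinset ⊆ (p.edges ++ q.edges).toFinset := fun e he => by
    have := c.edges_subset_edgeSet (List.mem_toFinset.mp he)
    rw [edgeSet_fromEdgeSet] at this
    simpa using this.1
  calc G.egirth ≤ H.egirth := egirth_anti hHG
    _ = (c.edges.toFinset.card : ℕ) := by
      rw [hcH, List.toFinset_card_of_nodup hc.edges_nodup, Walk.length_edges]
    _ ≤ ((p.edges ++ q.edges).length : ℕ) := by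
      exact_mod_cast (card_le_card hcedges).trans (List.toFinset_card_le _)
    _ = p.length + q.length := by simp

section MooreBound

variable [Fintype V] [DecidableEq V] [DecidableRel G.Adj] {v : V} {i : ℕ}

-- Paths are recorded as injective vertex sequences so that those of a given length form a
-- `Finset`.
variable (G) in
def pathsFrom (v : V) (i : ℕ) : Finset (Fin (i + 1) → V) :=
  {p | p 0 = v ∧ p.Injective ∧ ∀ t : Fin i, G.Adj (p t.castSucc) (p t.succ)}

theorem mem_pathsFrom {p : Fin (i + 1) → V} :
    p ∈ G.pathsFrom v i ↔
      p 0 = v ∧ p.Injective ∧ ∀ t : Fin i, G.Adj (p t.castSucc) (p t.succ) := by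
  simp [pathsFrom]

theorem exists_isPath_of_mem_pathsFrom {p : Fin (i + 1) → V} (hp : p ∈ G.pathsFrom v i) :
    ∃ w : G.Walk (p 0) (p (Fin.last i)), w.IsPath ∧ w.length = i ∧ w.support = List.ofFn p := by
  obtain ⟨-, hinj, hadj⟩ := mem_pathsFrom.mp hp
  obtain ⟨w, hlen, hsupp⟩ := Walk.exists_support_eq_ofFn p hadj
  exact ⟨w, by rw [Walk.isPath_def, hsupp]; exact List.nodup_ofFn.mpr hinj, hlen, hsupp⟩

theorem egirth_le_of_mem_pathsFrom_of_adj {p : Fin (i + 1) → V} (hp : p ∈ G.pathsFrom v i)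
    {j : Fin (i + 1)} (hj : j.val + 1 < i) (hadj : G.Adj (p (Fin.last i)) (p j)) :
    G.egirth ≤ i + 1 := by
  obtain ⟨w, hw, hlen, hsupp⟩ := exists_isPath_of_mem_pathsFrom hp
  have hwj : w.getVert j = p j := by
    rw [w.getVert_eq_support_getElem (by omega)]
    simp only [hsupp, List.getElem_ofFn]
  set arc := (w.drop j).copy hwj rfl
  have harc : arc.length = i - j := by simp [arc, Walk.drop_length, hlen]
  have hne : arc ≠ hadj.symm.toWalk := fun h => by
    have := congrArg Walk.length h
    rw [harc, Adj.length_toWalk] at this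
    omega
  calc G.egirth ≤ arc.length + hadj.symm.toWalk.length :=
        egirth_le_length_add_length ((Walk.isPath_copy _ _ _).mpr (hw.drop j))
          hadj.symm.isPath_toWalk hne
    _ ≤ i + 1 := by rw [harc, Adj.length_toWalk]; norm_cast; omega

theorem last_mem_support_of_mem_pathsFrom {p : Fin (i + 1) → V} (hp : p ∈ G.pathsFrom v i)
    (hv : v ∈ G.support) : p (Fin.last i) ∈ G.support := by
  obtain ⟨hp0, -, hadj⟩ := mem_pathsFrom.mp hp
  rcases i with _ | i
  · exact hp0 ▸ hv
  · exact ⟨_, (hadj (Fin.last i)).symm⟩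

theorem two_le_card_neighborFinset_sdiff_image {p : Fin (i + 1) → V}
    (hp : p ∈ G.pathsFrom v i) (hv : v ∈ G.support) (h3 : ∀ u ∈ G.support, 3 ≤ G.degree u)
    (hg : i + 1 < G.egirth) :
    2 ≤ #(G.neighborFinset (p (Fin.last i)) \ univ.image p) := by
  have hback : G.neighborFinset (p (Fin.last i)) ∩ univ.image p ⊆ {p ⟨i - 1, by omega⟩} := by
    intro x hx
    obtain ⟨hadj, j, -, rfl⟩ : G.Adj (p (Fin.last i)) x ∧ ∃ j ∈ univ, p j = x := by
      simpa using hx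
    rw [mem_singleton]
    rcases lt_trichotomy (j.val + 1) i with hj | hj | hj
    · exact absurd (egirth_le_of_mem_pathsFrom_of_adj hp hj hadj) (not_le.mpr hg)
    · exact congrArg p (Fin.ext (by change j.val = i - 1; omega))
    · obtain rfl : j = Fin.last i := Fin.ext (by rw [Fin.val_last]; omega)
      exact absurd hadj G.irrefl
  have hdeg := h3 _ (last_mem_support_of_mem_pathsFrom hp hv)
  have hsplit := card_sdiff_add_card_inter (G.neighborFinset (p (Fin.last i))) (univ.image p)
  rw [card_neighborFinset_eq_degree] at hsplit
  have := (card_le_card hback).trans (card_singleton _).le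
  omega

theorem snoc_mem_pathsFrom {p : Fin (i + 1) → V} (hp : p ∈ G.pathsFrom v i) {x : V}
    (hx : x ∈ G.neighborFinset (p (Fin.last i)) \ univ.image p) :
    Fin.snoc p x ∈ G.pathsFrom v (i + 1) := by
  obtain ⟨hp0, hinj, hadj⟩ := mem_pathsFrom.mp hp
  obtain ⟨hx, hxp⟩ : G.Adj (p (Fin.last i)) x ∧ x ∉ Set.range p := by simpa using hx
  refine mem_pathsFrom.mpr ⟨?_, Fin.snoc_injective_of_injective hinj hxp, fun t => ?_⟩
  · rwa [← Fin.castSucc_zero, Fin.snoc_castSucc]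
  · induction t using Fin.lastCases with
    | last => rwa [Fin.succ_last, Fin.snoc_last, Fin.snoc_castSucc]
    | cast t => rw [Fin.succ_castSucc, Fin.snoc_castSucc, Fin.snoc_castSucc]; exact hadj t

theorem two_mul_card_pathsFrom_le (hv : v ∈ G.support) (h3 : ∀ u ∈ G.support, 3 ≤ G.degree u)
    (hg : i + 1 < G.egirth) : 2 * #(G.pathsFrom v i) ≤ #(G.pathsFrom v (i + 1)) := by
  set next := fun p : Fin (i + 1) → V => G.neighborFinset (p (Fin.last i)) \ univ.image p
  set extend : (Fin (i + 1) → V) → Finset (Fin (i + 2) → V) :=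
    fun p => (next p).image (Fin.snoc p)
  have hdisj : (G.pathsFrom v i : Set _).PairwiseDisjoint extend :=
    fun p _ q _ hpq => Finset.disjoint_left.mpr fun r hp hq => hpq <| by
      obtain ⟨x, -, rfl⟩ := mem_image.mp hp
      obtain ⟨y, -, hy⟩ := mem_image.mp hq
      exact (Fin.snoc_injective2 hy).1.symm
  calc 2 * #(G.pathsFrom v i) ≤ ∑ p ∈ G.pathsFrom v i, #(next p) := by
        rw [mul_comm, ← smul_eq_mul, ← sum_const]
        exact sum_le_sum fun p hp => two_le_card_neighborFinset_sdiff_image hp hv h3 hg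
    _ = #((G.pathsFrom v i).biUnion extend) := by
        rw [card_biUnion hdisj]
        exact sum_congr rfl fun p _ =>
          (card_image_of_injective (next p) (Fin.snoc_right_injective (α := fun _ => V) p)).symm
    _ ≤ #(G.pathsFrom v (i + 1)) :=
        card_le_card <| biUnion_subset.mpr fun p hp =>
          image_subset_iff.mpr fun x hx => snoc_mem_pathsFrom hp hx

theorem injOn_last_pathsFrom (hg : 2 * i < G.egirth) :
    Set.InjOn (fun p : Fin (i + 1) → V => p (Fin.last i)) (G.pathsFrom v i) := by
  intro p hp q hq hpq
  by_contra hne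
  obtain ⟨w, hw, hwlen, hwsupp⟩ := exists_isPath_of_mem_pathsFrom hp
  obtain ⟨w', hw', hwlen', hwsupp'⟩ := exists_isPath_of_mem_pathsFrom hq
  have h0 : p 0 = q 0 := ((mem_pathsFrom.mp hp).1).trans (mem_pathsFrom.mp hq).1.symm
  have hww : w.copy h0 hpq ≠ w' := fun h => hne <| List.ofFn_injective <| by
    rw [← hwsupp, ← hwsupp', ← h, Walk.support_copy]
  have := egirth_le_length_add_length ((Walk.isPath_copy _ _ _).mpr hw) hw' hww
  rw [Walk.length_copy, hwlen, hwlen', ← two_mul] at this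
  exact (this.trans_lt hg).false

theorem egirth_le_two_mul_of_three_le_degree {k : ℕ} (hv : v ∈ G.support)
    (h3 : ∀ u ∈ G.support, 3 ≤ G.degree u) (hk : Fintype.card V < 2 ^ k) :
    G.egirth ≤ 2 * k := by
  by_contra! hg
  have hgrowth : ∀ i ≤ k, 2 ^ i ≤ #(G.pathsFrom v i) := by
    intro i hi
    induction i with
    | zero =>
      exact card_pos.mpr ⟨fun _ => v,
        mem_pathsFrom.mpr ⟨rfl, fun a b _ => Fin.ext (by omega), fun t => t.elim0⟩⟩
    | succ i ih =>
      have : (i + 1 : ℕ∞) < G.egirth := lt_of_le_of_lt (by norm_cast; omega) hg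
      calc 2 ^ (i + 1) = 2 * 2 ^ i := by ring
        _ ≤ 2 * #(G.pathsFrom v i) := by have := ih (by omega); omega
        _ ≤ _ := two_mul_card_pathsFrom_le hv h3 this
  have hcard :=
    card_le_card_of_injOn _ (fun p _ => mem_univ _) (injOn_last_pathsFrom (v := v) hg)
  have := hgrowth k le_rfl
  rw [card_univ] at hcard
  omega

end MooreBound

theorem egirth_le_of_two_mul_card_support_lt [Fintype V] [DecidableEq V] [DecidableRel G.Adj]
    (h : 2 * Fintype.card G.support < #G.edgeFinset) :
    G.egirth ≤ 2 * (Nat.log 2 (Fintype.card V) + 1) := by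
  induction hm : #G.edgeFinset using Nat.strong_induction_on generalizing G with
  | _ m ih =>
  obtain ⟨e, he⟩ := card_pos.mp (by omega : 0 < #G.edgeFinset)
  induction e with | h a b =>
  by_cases h3 : ∀ u ∈ G.support, 3 ≤ G.degree u
  · exact egirth_le_two_mul_of_three_le_degree ⟨b, mem_edgeFinset.mp he⟩ h3
      (Nat.lt_pow_succ_log_self one_lt_two _)
  push Not at h3
  obtain ⟨u, hu, hdeg⟩ := h3
  have hpos : 0 < G.degree u := (G.degree_pos_iff_exists_adj u).mpr hu
  have hsupp := G.card_support_deleteIncidenceSet hu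
  have hedges := G.card_edgeFinset_deleteIncidenceSet u
  have hs : 0 < Fintype.card G.support := Fintype.card_pos_iff.mpr ⟨⟨u, hu⟩⟩
  calc G.egirth ≤ (G.deleteIncidenceSet u).egirth := egirth_anti (G.deleteIncidenceSet_le u)
    _ ≤ _ := ih _ (by omega) (by omega) rfl

variable (G) in
def IsShortCycleDecomposition (L : List (Σ v, G.Walk v v)) (m ℓ : ℕ) : Prop :=
  (∀ c ∈ L, c.2.IsCycle ∧ c.2.length ≤ ℓ) ∧
    L.Pairwise (fun c c' => ∀ e ∈ c.2.edges, e ∉ c'.2.edges) ∧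
    {e | e ∈ G.edgeSet ∧ ∀ c ∈ L, e ∉ c.2.edges}.ncard ≤ m

theorem IsShortCycleDecomposition.cons {m ℓ : ℕ} {u : V} {c : G.Walk u u} (hc : c.IsCycle)
    (hcℓ : c.length ≤ ℓ) {L : List (Σ v, (G.deleteEdges c.edgeSet).Walk v v)}
    (hL : (G.deleteEdges c.edgeSet).IsShortCycleDecomposition L m ℓ) :
    G.IsShortCycleDecomposition
      (⟨u, c⟩ :: L.map fun d => ⟨d.1, d.2.mapLe (G.deleteEdges_le _)⟩) m ℓ := by
  obtain ⟨hcyc, hdisj, hunc⟩ := hL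
  refine ⟨?_, ?_, ?_⟩
  · simp only [List.mem_cons, List.mem_map]
    rintro _ (rfl | ⟨d, hd, rfl⟩)
    · exact ⟨hc, hcℓ⟩
    · exact ⟨(hcyc d hd).1.mapLe _, by simpa using (hcyc d hd).2⟩
  · rw [List.pairwise_cons, List.pairwise_map]
    refine ⟨?_, hdisj.imp fun h => by simpa [Walk.edges_mapLe_eq_edges] using h⟩
    simp only [List.mem_map]
    rintro _ ⟨d, -, rfl⟩ e he he'
    rw [Walk.edges_mapLe_eq_edges] at he'
    have := d.2.edges_subset_edgeSet he'
    rw [edgeSet_deleteEdges] at this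
    exact this.2 he
  · convert hunc using 2
    ext e
    simp only [Set.mem_ofPred_eq, List.forall_mem_cons, List.forall_mem_map,
      Walk.edges_mapLe_eq_edges, edgeSet_deleteEdges, Set.mem_sdiff, Walk.mem_edgeSet]
    tauto

theorem exists_isShortCycleDecomposition [Fintype V] (G : SimpleGraph V) :
    ∃ L, G.IsShortCycleDecomposition L (2 * Fintype.card V)
      (2 * (Nat.log 2 (Fintype.card V) + 1)) := by
  classical
  induction hm : G.edgeSet.ncard using Nat.strong_induction_on generalizing G with
  | _ m ih =>
  by_cases hsmall : G.edgeSet.ncard ≤ 2 * Fintype.card V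
  · exact ⟨[], by simp, .nil, by simpa using hsmall⟩
  have hg := egirth_le_of_two_mul_card_support_lt (G := G) <| by
    have := set_fintype_card_le_univ G.support
    rw [← coe_edgeFinset, Set.ncard_coe_finset] at hsmall
    omega
  have hfin : G.egirth ≠ ⊤ := ne_top_of_le_ne_top (by exact_mod_cast ENat.natCast_ne_top _) hg
  obtain ⟨u, c, hc, hcg⟩ := exists_egirth_eq_length.mpr (mt egirth_eq_top.mpr hfin)
  have hlt : G.deleteEdges c.edgeSet < G := (G.deleteEdges_le _).lt_of_ne fun h => by
    obtain ⟨e, he⟩ := List.exists_mem_of_ne_nil _ (Walk.edges_eq_nil.not.mpr hc.not_nil)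
    exact Set.disjoint_left.mp (deleteEdges_eq_self.mp h) (c.edges_subset_edgeSet he) he
  obtain ⟨L, hL⟩ :=
    ih _ (hm ▸ Set.ncard_lt_ncard (edgeSet_strict_mono hlt)) (G.deleteEdges c.edgeSet) rfl
  rw [hcg] at hg
  exact ⟨_, hL.cons hc (by exact_mod_cast hg)⟩

end SimpleGraph

theorem two_mul_natLog_succ_le_nine_mul_log_sq {n : ℕ} (hn : 2 ≤ n) :
    (2 * (Nat.log 2 n + 1) : ℝ) ≤ 9 * Real.log n ^ 2 := by
  have hN : (1 : ℝ) ≤ Nat.log 2 n := by exact_mod_cast Nat.log_pos one_lt_two hn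
  have hlog2 : 0.6931 < Real.log 2 := Real.log_two_gt_d9.trans_le' (by norm_num)
  have hlogn : Real.log 2 ≤ Real.log n := Real.log_le_log two_pos (by exact_mod_cast hn)
  have hNlog : Nat.log 2 n * Real.log 2 ≤ Real.log n := by
    have := Real.natLog_le_logb n 2
    rwa [Real.logb, le_div_iff₀ (by positivity)] at this
  have hsq : 0.48 ≤ Real.log 2 * Real.log 2 := by nlinarith
  calc (2 * (Nat.log 2 n + 1) : ℝ) ≤ 9 * (Real.log 2 * (Nat.log 2 n * Real.log 2)) := by
        nlinarith [mul_le_mul_of_nonneg_left hsq (zero_le_one.trans hN)]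
    _ ≤ 9 * (Real.log n * Real.log n) := by gcongr
    _ = 9 * Real.log n ^ 2 := by ring

theorem two_mul_le_nine_mul_mul_log {n : ℕ} (hn : 2 ≤ n) :
    (2 * n : ℝ) ≤ 9 * n * Real.log n := by
  have hlog2 : 0.6931 < Real.log 2 := Real.log_two_gt_d9.trans_le' (by norm_num)
  have hlogn : Real.log 2 ≤ Real.log n := Real.log_le_log two_pos (by exact_mod_cast hn)
  have : (0 : ℝ) ≤ n := n.cast_nonneg
  nlinarith

/-- There is an absolute constant `C > 0` such that every simple graph `G`
on `n ≥ 2` vertices admits a family of pairwise edge-disjoint cycles, each of length at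
most `C·(log n)²`, covering all but at most `C·n·log n` edges of `G`. -/
theorem stmt7 :
    ∃ C : ℝ, 0 < C ∧
      ∀ (n : ℕ), 2 ≤ n → ∀ G : SimpleGraph (Fin n),
        ∃ L : List ((v : Fin n) × G.Walk v v),
          (∀ c ∈ L, c.2.IsCycle ∧ (c.2.length : ℝ) ≤ C * (Real.log n) ^ 2) ∧
          List.Pairwise (fun c c' => ∀ e ∈ c.2.edges, e ∉ c'.2.edges) L ∧
          (({e : Sym2 (Fin n) | e ∈ G.edgeSet ∧ ∀ c ∈ L, e ∉ c.2.edges}.ncard : ℝ))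
            ≤ C * (n : ℝ) * Real.log n := by
  refine ⟨9, by norm_num, fun n hn G => ?_⟩
  obtain ⟨L, hcycles, hdisjoint, huncovered⟩ := G.exists_isShortCycleDecomposition
  rw [Fintype.card_fin] at hcycles huncovered
  refine ⟨L, fun c hc => ⟨(hcycles c hc).1, ?_⟩, hdisjoint, ?_⟩
  · calc (c.2.length : ℝ) ≤ 2 * (Nat.log 2 n + 1) := by exact_mod_cast (hcycles c hc).2
      _ ≤ 9 * Real.log n ^ 2 := two_mul_natLog_succ_le_nine_mul_log_sq hn
  · calc _ ≤ (2 * n : ℝ) := by exact_mod_cast huncovered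
      _ ≤ 9 * n * Real.log n := two_mul_le_nine_mul_mul_log hn
end
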